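/- arXiv:0712.2857 — 6 statements merged into one kernel-verified Lean document; each statement's English description precedes it below -/
import Mathlib

section
/- For all integers n and t with 0 < t < n and every real number p with 0 ≤ p ≤ 1, the single-exclusion number satisfies S(n,t) ≤ p·binom(n,t) + Σ_{i=1}^{t+1} binom(n,i)·(1−p)^{i·binom(n−i, t−i+1)}, where binom(a,b) denotes the binomial coefficient (equal to 0 when b < 0 or b > a). -/
/-- An `(n,t)`-single-exclusion system: a collection of `t`-subsets (blocks) of an
`n`-set such that every subset `X` with `1 ≤ |X| ≤ t+1` has a block containing all
but exactly one element of `X`. -/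
def IsSESystem (n t : ℕ) (S : Finset (Finset (Fin n))) : Prop :=
  (∀ B ∈ S, B.card = t) ∧
  ∀ X : Finset (Fin n), 1 ≤ X.card → X.card ≤ t + 1 → ∃ B ∈ S, (X \ B).card = 1

/-- The `(n,t)`-single-exclusion number `S(n,t)`: the least number of blocks in an
`(n,t)`-single-exclusion system. -/
noncomputable def SENumber (n t : ℕ) : ℕ :=
  sInf {m : ℕ | ∃ S : Finset (Finset (Fin n)), IsSESystem n t S ∧ S.card = m}


/-!
Alteration method. Choose a random family `S` of `t`-sets, each independently with
probability `p`; its expected size is `p * C(n, t)`. A set `X` with `|X| = i` is covered by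
every block that omits exactly one element `x` of `X` and contains `X \ {x}`, and there are at
least `i * C(n - i, t + 1 - i)` such blocks (pick `x`, then fill up outside `X`). So `X` stays
uncovered with probability at most `(1 - p) ^ (i * C(n - i, t + 1 - i))`. Some `S` has
`|S| + #uncovered` at most its expectation, and adding one block for each uncovered set
turns `S` into a single-exclusion system.
-/

open Finset

section RandomSubset

variable {α : Type*}

/-- The probability that keeping each element of `A` independently with probability `p`
yields exactly `S`. -/
def randomSubsetWeight (p : ℝ) (A S : Finset α) : ℝ :=
  p ^ #S * (1 - p) ^ (#A - #S)

variable {p : ℝ} {A : Finset α}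

lemma randomSubsetWeight_nonneg (hp0 : 0 ≤ p) (hp1 : p ≤ 1) (S : Finset α) :
    0 ≤ randomSubsetWeight p A S := by
  have : 0 ≤ 1 - p := by linarith
  unfold randomSubsetWeight
  positivity

lemma sum_randomSubsetWeight_powerset : ∑ S ∈ A.powerset, randomSubsetWeight p A S = 1 := by
  simp [randomSubsetWeight, sum_pow_mul_eq_add_pow]

variable [DecidableEq α]

lemma sum_randomSubsetWeight_filter_disjoint {D : Finset α} (hD : D ⊆ A) :
    ∑ S ∈ A.powerset with Disjoint S D, randomSubsetWeight p A S = (1 - p) ^ #D := by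
  have hA : #A = #D + #(A \ D) := by rw [← card_sdiff_add_card_eq_card hD, add_comm]
  have hfilter : {S ∈ A.powerset | Disjoint S D} = (A \ D).powerset := by
    ext S; simp [subset_sdiff]
  calc ∑ S ∈ A.powerset with Disjoint S D, randomSubsetWeight p A S
      = ∑ S ∈ (A \ D).powerset, (1 - p) ^ #D * (p ^ #S * (1 - p) ^ (#(A \ D) - #S)) := by
        rw [hfilter]
        refine sum_congr rfl fun S hS => ?_
        rw [randomSubsetWeight, hA, Nat.add_sub_assoc (card_le_card (mem_powerset.1 hS)), pow_add]
        ring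
    _ = (1 - p) ^ #D := by rw [← mul_sum, sum_pow_mul_eq_add_pow]; simp

lemma sum_randomSubsetWeight_filter_mem {B : α} (hB : B ∈ A) :
    ∑ S ∈ A.powerset with B ∈ S, randomSubsetWeight p A S = p := by
  have hsplit := sum_filter_add_sum_filter_not A.powerset (B ∈ ·) (randomSubsetWeight p A)
  have hnot : ∑ S ∈ A.powerset with B ∉ S, randomSubsetWeight p A S = 1 - p := by
    simpa using sum_randomSubsetWeight_filter_disjoint (p := p) (singleton_subset_iff.2 hB)
  rw [sum_randomSubsetWeight_powerset, hnot] at hsplit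
  linarith

lemma sum_randomSubsetWeight_mul_card :
    ∑ S ∈ A.powerset, randomSubsetWeight p A S * #S = p * #A := by
  calc ∑ S ∈ A.powerset, randomSubsetWeight p A S * #S
      = ∑ S ∈ A.powerset, ∑ B ∈ A, if B ∈ S then randomSubsetWeight p A S else 0 := by
        refine sum_congr rfl fun S hS => ?_
        rw [sum_ite_mem, inter_eq_right.2 (mem_powerset.1 hS), sum_const, nsmul_eq_mul, mul_comm]
    _ = ∑ B ∈ A, ∑ S ∈ A.powerset with B ∈ S, randomSubsetWeight p A S := by
        rw [sum_comm]; simp_rw [sum_filter]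
    _ = p * #A := by
        rw [sum_congr rfl fun B hB => sum_randomSubsetWeight_filter_mem hB]
        simp [mul_comm]

lemma sum_randomSubsetWeight_mul_card_filter_disjoint {ι : Type*} (V : Finset ι)
    (D : ι → Finset α) (hD : ∀ x ∈ V, D x ⊆ A) :
    ∑ S ∈ A.powerset, randomSubsetWeight p A S * #{x ∈ V | Disjoint S (D x)} =
      ∑ x ∈ V, (1 - p) ^ #(D x) := by
  calc ∑ S ∈ A.powerset, randomSubsetWeight p A S * #{x ∈ V | Disjoint S (D x)}
      = ∑ S ∈ A.powerset, ∑ x ∈ V, if Disjoint S (D x) then randomSubsetWeight p A S else 0 := by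
        simp_rw [card_filter, Nat.cast_sum, mul_sum]
        simp
    _ = ∑ x ∈ V, ∑ S ∈ A.powerset with Disjoint S (D x), randomSubsetWeight p A S := by
        rw [sum_comm]; simp_rw [sum_filter]
    _ = ∑ x ∈ V, (1 - p) ^ #(D x) :=
        sum_congr rfl fun x hx => sum_randomSubsetWeight_filter_disjoint (hD x hx)

end RandomSubset

lemma Finset.exists_le_of_sum_mul_le {ι : Type*} {s : Finset ι} {w f : ι → ℝ} {R : ℝ}
    (hw : ∀ i ∈ s, 0 ≤ w i) (hw1 : ∑ i ∈ s, w i = 1) (h : ∑ i ∈ s, w i * f i ≤ R) :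
    ∃ i ∈ s, f i ≤ R := by
  by_contra! hlt
  obtain ⟨j, hj, hwj⟩ := exists_ne_zero_of_sum_ne_zero (hw1 ▸ one_ne_zero : ∑ i ∈ s, w i ≠ 0)
  have : ∑ i ∈ s, w i * R < ∑ i ∈ s, w i * f i :=
    sum_lt_sum (fun i hi => mul_le_mul_of_nonneg_left (hlt i hi).le (hw i hi))
      ⟨j, hj, mul_lt_mul_of_pos_left (hlt j hj) ((hw j hj).lt_of_ne' hwj)⟩
  rw [← sum_mul, hw1, one_mul] at this
  linarith

section Blocks

variable {α : Type*} [DecidableEq α]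

lemma sdiff_erase_union_of_disjoint {X C : Finset α} {x : α} (hx : x ∈ X) (hC : Disjoint X C) :
    X \ (X.erase x ∪ C) = {x} := by
  ext y
  by_cases hy : y = x
  · subst hy; simp [hx, disjoint_left.1 hC hx]
  · simp [hy]; tauto

lemma erase_union_sdiff_of_disjoint {X C : Finset α} {x : α} (hC : Disjoint X C) :
    (X.erase x ∪ C) \ X = C := by
  rw [union_sdiff_distrib, sdiff_eq_empty_iff_subset.2 (erase_subset x X), empty_union,
    sdiff_eq_self_of_disjoint hC.symm]

variable [Fintype α]

def blocksMissingOne (t : ℕ) (X : Finset α) : Finset (Finset α) :=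
  {B ∈ powersetCard t univ | #(X \ B) = 1}

lemma blocksMissingOne_subset {t : ℕ} {X : Finset α} :
    blocksMissingOne t X ⊆ powersetCard t univ :=
  filter_subset _ _

lemma card_mul_choose_le_card_blocksMissingOne {t : ℕ} {X : Finset α} (hX : #X ≤ t + 1) :
    #X * (Fintype.card α - #X).choose (t + 1 - #X) ≤ #(blocksMissingOne t X) := by
  rw [← card_compl, ← card_powersetCard, ← card_product]
  refine card_le_card_of_injOn (fun xC => X.erase xC.1 ∪ xC.2) ?_ ?_
  · rintro ⟨x, C⟩ hxC
    simp only [coe_product, Set.mem_prod, mem_coe, mem_powersetCard,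
      subset_compl_iff_disjoint_left] at hxC
    obtain ⟨hx, hXC, hC⟩ := hxC
    have hdisj : Disjoint (X.erase x) C := hXC.mono_left (erase_subset x X)
    have := card_pos.2 ⟨x, hx⟩
    simp only [blocksMissingOne, coe_filter, mem_powersetCard_univ]
    refine ⟨?_, by rw [sdiff_erase_union_of_disjoint hx hXC, card_singleton]⟩
    rw [card_union_of_disjoint hdisj, card_erase_of_mem hx, hC]
    omega
  · rintro ⟨x, C⟩ hxC ⟨y, C'⟩ hyC' hEq
    simp only [coe_product, Set.mem_prod, mem_coe, mem_powersetCard,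
      subset_compl_iff_disjoint_left] at hxC hyC' hEq
    have hxy : ({x} : Finset α) = {y} := by
      rw [← sdiff_erase_union_of_disjoint hxC.1 hxC.2.1, hEq,
        sdiff_erase_union_of_disjoint hyC'.1 hyC'.2.1]
    have hCC' : C = C' := by
      rw [← erase_union_sdiff_of_disjoint (x := x) hxC.2.1, hEq,
        erase_union_sdiff_of_disjoint hyC'.2.1]
    rw [singleton_inj.1 hxy, hCC']

lemma blocksMissingOne_nonempty {t : ℕ} {X : Finset α} (h1 : 1 ≤ #X) (h2 : #X ≤ t + 1)
    (ht : t < Fintype.card α) : (blocksMissingOne t X).Nonempty := by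
  have := card_le_univ X
  rw [← card_pos]
  exact (Nat.mul_pos h1 (Nat.choose_pos (by omega))).trans_le
    (card_mul_choose_le_card_blocksMissingOne h2)

end Blocks

lemma Finset.sum_filter_card_mem {α M : Type*} [Fintype α] [AddCommMonoid M] (I : Finset ℕ)
    (f : ℕ → M) :
    ∑ X ∈ ({X | #X ∈ I} : Finset (Finset α)), f #X = ∑ i ∈ I, (Fintype.card α).choose i • f i := by
  rw [← sum_fiberwise_of_maps_to (g := (#·)) fun X hX => (mem_filter.1 hX).2]
  refine sum_congr rfl fun i hi => ?_
  have hfiber : ({X ∈ ({X | #X ∈ I} : Finset (Finset α)) | #X = i}) = powersetCard i univ := by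
    ext X; simp only [mem_filter, mem_univ, true_and, mem_powersetCard_univ]
    exact ⟨And.right, fun h => ⟨h ▸ hi, h⟩⟩
  rw [hfiber, sum_congr rfl fun X hX => by rw [(mem_powersetCard_univ.1 hX)], sum_const,
    card_powersetCard, card_univ]

section SingleExclusion

variable {α : Type*} [Fintype α] [DecidableEq α]

def uncovered (t : ℕ) (S : Finset (Finset α)) : Finset (Finset α) :=
  {X ∈ ({X | #X ∈ Icc 1 (t + 1)} : Finset (Finset α)) | Disjoint S (blocksMissingOne t X)}

lemma sum_randomSubsetWeight_mul_card_uncovered_le {t : ℕ} {p : ℝ} (hp0 : 0 ≤ p) (hp1 : p ≤ 1) :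
    ∑ S ∈ (powersetCard t (univ : Finset α)).powerset,
        randomSubsetWeight p (powersetCard t univ) S * #(uncovered t S) ≤
      ∑ i ∈ Icc 1 (t + 1),
        ((Fintype.card α).choose i : ℝ) * (1 - p) ^ (i * (Fintype.card α - i).choose (t + 1 - i)) := by
  simp only [uncovered]
  rw [sum_randomSubsetWeight_mul_card_filter_disjoint _ _
    fun X _ => blocksMissingOne_subset (t := t) (X := X)]
  calc ∑ X ∈ ({X | #X ∈ Icc 1 (t + 1)} : Finset (Finset α)), (1 - p) ^ #(blocksMissingOne t X)
      ≤ ∑ X ∈ ({X | #X ∈ Icc 1 (t + 1)} : Finset (Finset α)),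
          (1 - p) ^ (#X * (Fintype.card α - #X).choose (t + 1 - #X)) :=
        sum_le_sum fun X hX => pow_le_pow_of_le_one (by linarith) (by linarith)
          (card_mul_choose_le_card_blocksMissingOne (mem_Icc.1 (mem_filter.1 hX).2).2)
    _ = _ := by
        rw [sum_filter_card_mem (α := α) _
          fun i => (1 - p) ^ (i * (Fintype.card α - i).choose (t + 1 - i))]
        simp only [nsmul_eq_mul]

end SingleExclusion

lemma SENumber_le_card {n t : ℕ} {S : Finset (Finset (Fin n))} (hS : IsSESystem n t S) :
    SENumber n t ≤ #S :=
  Nat.sInf_le ⟨S, hS, rfl⟩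

lemma SENumber_le_card_add_card_uncovered {n t : ℕ} (htn : t < n) {S : Finset (Finset (Fin n))}
    (hS : S ⊆ powersetCard t univ) : SENumber n t ≤ #S + #(uncovered t S) := by
  have hfix : ∀ X ∈ uncovered t S, (blocksMissingOne t X).Nonempty := fun X hX => by
    obtain ⟨h1, h2⟩ := mem_Icc.1 (mem_filter.1 (mem_filter.1 hX).1).2
    exact blocksMissingOne_nonempty h1 h2 (by simpa using htn)
  choose! fix hfix using hfix
  have hSE : IsSESystem n t (S ∪ (uncovered t S).image fix) := by
    refine ⟨fun B hB => ?_, fun X h1 h2 => ?_⟩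
    · rcases mem_union.1 hB with hB | hB
      · exact (mem_powersetCard.1 (hS hB)).2
      · obtain ⟨X, hX, rfl⟩ := mem_image.1 hB
        exact (mem_powersetCard.1 (mem_filter.1 (hfix X hX)).1).2
    · by_cases hX : Disjoint S (blocksMissingOne t X)
      · have hXu : X ∈ uncovered t S :=
          mem_filter.2 ⟨mem_filter.2 ⟨mem_univ X, mem_Icc.2 ⟨h1, h2⟩⟩, hX⟩
        exact ⟨fix X, mem_union_right _ (mem_image_of_mem _ hXu), (mem_filter.1 (hfix X hXu)).2⟩
      · obtain ⟨B, hBS, hB⟩ := not_disjoint_iff.1 hX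
        exact ⟨B, mem_union_left _ hBS, (mem_filter.1 hB).2⟩
  calc SENumber n t ≤ #(S ∪ (uncovered t S).image fix) := SENumber_le_card hSE
    _ ≤ #S + #(uncovered t S) := (card_union_le _ _).trans (Nat.add_le_add_left card_image_le _)

theorem stmt0_general (n t : ℕ) (htn : t < n) (p : ℝ) (hp0 : 0 ≤ p) (hp1 : p ≤ 1) :
    (SENumber n t : ℝ) ≤ p * (n.choose t : ℝ) +
      ∑ i ∈ Finset.Icc 1 (t + 1),
        (n.choose i : ℝ) * (1 - p) ^ (i * ((n - i).choose (t + 1 - i))) := by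
  set A := powersetCard t (univ : Finset (Fin n))
  have hexpected : ∑ S ∈ A.powerset, randomSubsetWeight p A S * (#S + #(uncovered t S) : ℝ) ≤
      p * (n.choose t : ℝ) + ∑ i ∈ Finset.Icc 1 (t + 1),
        (n.choose i : ℝ) * (1 - p) ^ (i * ((n - i).choose (t + 1 - i))) := by
    simp_rw [mul_add, sum_add_distrib, sum_randomSubsetWeight_mul_card]
    simpa [A] using sum_randomSubsetWeight_mul_card_uncovered_le (α := Fin n) (t := t) hp0 hp1
  obtain ⟨S, hSA, hS⟩ := exists_le_of_sum_mul_le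
    (fun S _ => randomSubsetWeight_nonneg hp0 hp1 S) sum_randomSubsetWeight_powerset hexpected
  calc (SENumber n t : ℝ) ≤ #S + #(uncovered t S) := by
        exact_mod_cast SENumber_le_card_add_card_uncovered htn (mem_powerset.1 hSA)
    _ ≤ _ := hS

theorem stmt0 (n t : ℕ) (ht : 0 < t) (htn : t < n) (p : ℝ) (hp0 : 0 ≤ p) (hp1 : p ≤ 1) :
    (SENumber n t : ℝ) ≤ p * (n.choose t : ℝ) +
      ∑ i ∈ Finset.Icc 1 (t + 1),
        (n.choose i : ℝ) * (1 - p) ^ (i * ((n - i).choose (t + 1 - i))) :=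
  stmt0_general n t htn p hp0 hp1
end

section
/- For all integers n, t and l with 0 < t < n − 2 and n/(n−t−2) ≤ l ≤ n, the single-exclusion number satisfies S(n,t) ≤ (1/l)·binom(n,t) + l·[ binom(n−⌊n/l⌋, t) − binom(n−⌊n/l⌋−⌈n/l⌉, t−⌈n/l⌉) ], where binom(a,b) denotes the binomial coefficient (equal to 0 when b < 0 or b > a). -/
/-- Binomial coefficient with integer arguments, equal to `0` when either argument is
negative (in particular when the lower argument is negative), and to `Nat.choose`
otherwise (hence `0` when the lower argument exceeds the upper one). -/
def binom (a b : ℤ) : ℕ := if 0 ≤ a ∧ 0 ≤ b then a.toNat.choose b.toNat else 0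

open Finset

lemma binom_natCast_sub {a b : ℕ} (h : b ≤ a) (t : ℕ) :
    binom ((a : ℤ) - b) t = (a - b).choose t := by
  rw [binom, if_pos ⟨by omega, by omega⟩]
  congr 1; omega

lemma Nat.div_add_add_sub_one_div_le {n l : ℕ} (hl : 2 ≤ l) : n / l + (n + l - 1) / l ≤ n := by
  have hfloor : n / l ≤ n / 2 := Nat.div_le_div_left hl two_pos
  have hceil : (n + l - 1) / l ≤ (n + 1) / 2 := by
    rw [Nat.div_le_iff_le_mul_add_pred (by omega)]
    have : 2 * ((n + 1) / 2) ≤ l * ((n + 1) / 2) := Nat.mul_le_mul_right _ hl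
    omega
  omega

lemma le_mul_sub_of_div_le {n m l : ℕ} (hmn : m < n) (h : (n : ℝ) / (n - m) ≤ l) :
    n ≤ l * (n - m) := by
  rw [div_le_iff₀ (sub_pos.mpr (by exact_mod_cast hmn))] at h
  have : (n : ℝ) ≤ ((l * (n - m) : ℕ) : ℝ) := by
    rw [Nat.cast_mul, Nat.cast_sub hmn.le]
    linarith
  exact_mod_cast this

namespace Finset

variable {α : Type*} [DecidableEq α]

lemma card_filter_subset_powersetCard {M F : Finset α} (hFM : F ⊆ M) (t : ℕ) :
    #{B ∈ M.powersetCard t | F ⊆ B} = binom ((#M : ℤ) - #F) ((t : ℤ) - #F) := by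
  have hMF : #F ≤ #M := card_le_card hFM
  by_cases ht : #F ≤ t
  · rw [binom, if_pos ⟨by omega, by omega⟩, show ((#M : ℤ) - #F).toNat = #(M \ F) by
      rw [card_sdiff_of_subset hFM]; omega, show ((t : ℤ) - #F).toNat = t - #F by omega,
      ← card_powersetCard]
    refine card_nbij' (· \ F) (· ∪ F) ?_ ?_ ?_ ?_
    · intro B hB
      simp only [mem_coe, mem_filter, mem_powersetCard] at hB ⊢
      exact ⟨sdiff_subset_sdiff hB.1.1 le_rfl, by rw [card_sdiff_of_subset hB.2, hB.1.2]⟩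
    · intro S hS
      simp only [mem_coe, mem_filter, mem_powersetCard, subset_sdiff] at hS ⊢
      refine ⟨⟨union_subset hS.1.1 hFM, ?_⟩, subset_union_right⟩
      rw [card_union_of_disjoint hS.1.2, hS.2]
      omega
    · intro B hB
      exact sdiff_union_of_subset (mem_filter.mp hB).2
    · intro S hS
      exact union_sdiff_cancel_right (subset_sdiff.mp (mem_powersetCard.mp hS).1).2
  · rw [binom, if_neg (by omega), card_eq_zero, filter_eq_empty_iff]
    intro B hB hFB
    have := card_le_card hFB
    rw [(mem_powersetCard.mp hB).2] at this
    omega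

lemma card_sdiff_eq_one_of_erase_subset {X B : Finset α} {x : α} (hx : x ∈ X)
    (hXB : X.erase x ⊆ B) (hxB : x ∉ B) : #(X \ B) = 1 := by
  rw [card_eq_one]
  refine ⟨x, ?_⟩
  ext y
  simp only [mem_sdiff, mem_singleton]
  constructor
  · rintro ⟨hyX, hyB⟩
    by_contra hyx
    exact hyB (hXB (mem_erase.mpr ⟨hyx, hyX⟩))
  · rintro rfl
    exact ⟨hx, hxB⟩

variable [Fintype α]

lemma exists_card_eq_disjoint_card_sdiff_eq_one {X D : Finset α} {x : α} {t : ℕ}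
    (hx : x ∈ X) (hxD : x ∈ D) (hX : #X ≤ t + 1) (hXD : Disjoint (X.erase x) D)
    (hD : #D + t ≤ Fintype.card α) : ∃ B : Finset α, #B = t ∧ Disjoint B D ∧ #(X \ B) = 1 := by
  obtain ⟨B, hXB, hBD, hB⟩ := exists_subsuperset_card_eq (n := t)
    (subset_compl_iff_disjoint_right.mpr hXD) (by rw [card_erase_of_mem hx]; omega)
    (by rw [card_compl]; omega)
  have hBD' : Disjoint B D := subset_compl_iff_disjoint_right.mp hBD
  exact ⟨B, hB, hBD', card_sdiff_eq_one_of_erase_subset hx hXB (disjoint_right.mp hBD' hxD)⟩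

lemma card_filter_disjoint_not_subset_add_binom_le {G G' : Finset α} (hGG' : Disjoint G G')
    {a b : ℕ} (ha : a ≤ #G) (hb : #G' ≤ b) (hab : a + b ≤ Fintype.card α) (t : ℕ) :
    #{B ∈ powersetCard t (univ : Finset α) | Disjoint B G ∧ ¬ G' ⊆ B} +
      binom ((Fintype.card α : ℤ) - a - b) ((t : ℤ) - b) ≤ (Fintype.card α - a).choose t := by
  obtain ⟨M, hGM, -, hM⟩ := exists_subsuperset_card_eq
    (n := Fintype.card α - a) (subset_univ (Gᶜ : Finset α)) (by rw [card_compl]; omega)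
    (by rw [card_univ]; omega)
  obtain ⟨F, hG'F, hFM, hF⟩ := exists_subsuperset_card_eq
    ((subset_compl_iff_disjoint_left.mpr hGG').trans hGM) hb (by omega : b ≤ #M)
  have hsub : {B ∈ powersetCard t (univ : Finset α) | Disjoint B G ∧ ¬ G' ⊆ B} ⊆
      {B ∈ M.powersetCard t | ¬ F ⊆ B} := by
    intro B
    simp only [mem_filter, mem_powersetCard]
    rintro ⟨⟨-, hBt⟩, hBG, hG'B⟩
    exact ⟨⟨(subset_compl_iff_disjoint_right.mpr hBG).trans hGM, hBt⟩,
      fun hFB => hG'B (hG'F.trans hFB)⟩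
  have hsplit := card_filter_add_card_filter_not (s := M.powersetCard t) (fun B => F ⊆ B)
  rw [card_filter_subset_powersetCard hFM, card_powersetCard, hM, hF,
    Nat.cast_sub (by omega)] at hsplit
  have := card_le_card hsub
  omega

end Finset

section ColourBlocks

variable {α : Type*} [Fintype α] {l : ℕ} (col : α → ZMod l) (t : ℕ)

def colourClass (j : ZMod l) : Finset α := {x | col x = j}

variable {col} in
@[simp]
lemma mem_colourClass {j : ZMod l} {x : α} : x ∈ colourClass col j ↔ col x = j := by
  simp [colourClass]

def colourSumBlocks (c : ZMod l) : Finset (Finset α) :=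
  {B ∈ powersetCard t univ | ∑ x ∈ B, col x = c}

lemma exists_card_colourSumBlocks_le [NeZero l] :
    ∃ c, (#(colourSumBlocks col t c) : ℝ) ≤ (Fintype.card α).choose t / l := by
  obtain ⟨c, -, hc⟩ := exists_card_fiber_le_of_card_le_nsmul (s := powersetCard t univ)
    (f := fun B => ∑ x ∈ B, col x) (b := ((Fintype.card α).choose t / l : ℝ)) univ_nonempty
    (by rw [card_powersetCard, card_univ, card_univ, ZMod.card, nsmul_eq_mul,
      mul_div_cancel₀ _ (NeZero.ne (l : ℝ))])
  exact ⟨c, hc⟩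

variable [DecidableEq α]

def missingColourBlocks (j : ZMod l) : Finset (Finset α) :=
  {B ∈ powersetCard t univ | Disjoint B (colourClass col j) ∧ ¬ colourClass col (j + 1) ⊆ B}

def colourBlockSystem [NeZero l] (c : ZMod l) : Finset (Finset α) :=
  colourSumBlocks col t c ∪ univ.biUnion (missingColourBlocks col t)

variable {col t}

lemma card_of_mem_colourBlockSystem [NeZero l] {c : ZMod l} {B : Finset α}
    (hB : B ∈ colourBlockSystem col t c) : #B = t := by
  simp only [colourBlockSystem, colourSumBlocks, missingColourBlocks, mem_union, mem_biUnion,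
    mem_filter, mem_powersetCard] at hB
  obtain ⟨⟨-, hB⟩, -⟩ | ⟨-, -, ⟨-, hB⟩, -⟩ := hB <;> exact hB

lemma exists_mem_colourSumBlocks_card_sdiff_eq_one {X : Finset α}
    (hX : ∀ r, ∃ x ∈ X, col x = r) (hXt : #X ≤ t + 1) (htα : t + 1 ≤ Fintype.card α)
    (c : ZMod l) : ∃ B ∈ colourSumBlocks col t c, #(X \ B) = 1 := by
  obtain ⟨T, hXT, hT⟩ := exists_superset_card_eq hXt htα
  obtain ⟨x, hx, hxr⟩ := hX (∑ y ∈ T, col y - c)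
  refine ⟨T.erase x, ?_, card_sdiff_eq_one_of_erase_subset hx (erase_subset_erase x hXT)
    (notMem_erase x T)⟩
  simp only [colourSumBlocks, mem_filter, mem_powersetCard, subset_univ, true_and]
  rw [card_erase_of_mem (hXT hx), sum_erase_eq_sub (hXT hx), hT, hxr]
  exact ⟨rfl, sub_sub_cancel _ _⟩

lemma exists_mem_missingColourBlocks_card_sdiff_eq_one (hcol : Function.Surjective col)
    {X : Finset α} {j : ZMod l} (hXj : ∀ x ∈ X, col x ≠ j) (hX : X.Nonempty)
    (hXt : #X ≤ t + 1) (hj : #(colourClass col j) + t + 2 ≤ Fintype.card α) :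
    ∃ B ∈ missingColourBlocks col t j, #(X \ B) = 1 := by
  obtain ⟨x, y, hx, hy, hyX⟩ : ∃ x y, x ∈ X ∧ col y = j + 1 ∧ y ∉ X.erase x := by
    by_cases hmeet : ∃ x ∈ X, col x = j + 1
    · obtain ⟨x, hx, hxj⟩ := hmeet
      exact ⟨x, x, hx, hxj, notMem_erase x X⟩
    · obtain ⟨y, hy⟩ := hcol (j + 1)
      obtain ⟨x, hx⟩ := hX
      exact ⟨x, y, hx, hy, fun hyX => hmeet ⟨y, mem_of_mem_erase hyX, hy⟩⟩
  set D := insert x (insert y (colourClass col j))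
  have hXD : Disjoint (X.erase x) D := by
    rw [disjoint_insert_right, disjoint_insert_right]
    exact ⟨notMem_erase x X, hyX, disjoint_left.mpr fun z hz hzj =>
      hXj z (mem_of_mem_erase hz) (mem_colourClass.mp hzj)⟩
  have hD : #D + t ≤ Fintype.card α := by
    have : #D ≤ #(colourClass col j) + 2 :=
      (card_insert_le _ _).trans (Nat.add_le_add_right (card_insert_le _ _) 1)
    omega
  obtain ⟨B, hBt, hBD, hXB⟩ := exists_card_eq_disjoint_card_sdiff_eq_one hx (mem_insert_self x _)
    hXt hXD hD
  refine ⟨B, ?_, hXB⟩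
  simp only [missingColourBlocks, mem_filter, mem_powersetCard, subset_univ, true_and]
  refine ⟨hBt, hBD.mono_right ((subset_insert _ _).trans (subset_insert _ _)), fun h => ?_⟩
  exact disjoint_right.mp hBD (mem_insert_of_mem (mem_insert_self y _))
    (h (mem_colourClass.mpr hy))

lemma exists_mem_colourBlockSystem_card_sdiff_eq_one [NeZero l] (hcol : Function.Surjective col)
    (hclass : ∀ j, #(colourClass col j) + t + 2 ≤ Fintype.card α) (c : ZMod l) {X : Finset α}
    (hX : 1 ≤ #X) (hXt : #X ≤ t + 1) : ∃ B ∈ colourBlockSystem col t c, #(X \ B) = 1 := by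
  by_cases hall : ∀ r, ∃ x ∈ X, col x = r
  · obtain ⟨B, hB, hXB⟩ := exists_mem_colourSumBlocks_card_sdiff_eq_one hall hXt
      (by have := hclass 0; omega) c
    exact ⟨B, mem_union_left _ hB, hXB⟩
  · push Not at hall
    obtain ⟨j, hj⟩ := hall
    obtain ⟨B, hB, hXB⟩ := exists_mem_missingColourBlocks_card_sdiff_eq_one hcol hj
      (card_pos.mp hX) hXt (hclass j)
    exact ⟨B, mem_union_right _ (mem_biUnion.mpr ⟨j, mem_univ j, hB⟩), hXB⟩

lemma card_missingColourBlocks_add_binom_le [Nontrivial (ZMod l)] {a b : ℕ}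
    (ha : ∀ j, a ≤ #(colourClass col j)) (hb : ∀ j, #(colourClass col j) ≤ b)
    (hab : a + b ≤ Fintype.card α) (j : ZMod l) :
    #(missingColourBlocks col t j) + binom ((Fintype.card α : ℤ) - a - b) ((t : ℤ) - b) ≤
      (Fintype.card α - a).choose t :=
  card_filter_disjoint_not_subset_add_binom_le
    (disjoint_left.mpr fun _ hxj hxj' => one_ne_zero (left_eq_add.mp
      ((mem_colourClass.mp hxj).symm.trans (mem_colourClass.mp hxj'))))
    (ha j) (hb (j + 1)) hab t

lemma card_colourBlockSystem_le [NeZero l] [Nontrivial (ZMod l)] {a b : ℕ}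
    (ha : ∀ j, a ≤ #(colourClass col j)) (hb : ∀ j, #(colourClass col j) ≤ b)
    (hab : a + b ≤ Fintype.card α) (c : ZMod l) :
    (#(colourBlockSystem col t c) : ℝ) ≤ #(colourSumBlocks col t c) +
      l * ((Fintype.card α - a).choose t - binom ((Fintype.card α : ℤ) - a - b) ((t : ℤ) - b)) :=
  calc (#(colourBlockSystem col t c) : ℝ)
      ≤ #(colourSumBlocks col t c) + ∑ j, (#(missingColourBlocks col t j) : ℝ) :=
        mod_cast (card_union_le _ _).trans (Nat.add_le_add_left card_biUnion_le _)
    _ ≤ #(colourSumBlocks col t c) + ∑ _j : ZMod l, ((Fintype.card α - a).choose t -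
        binom ((Fintype.card α : ℤ) - a - b) ((t : ℤ) - b) : ℝ) := by
      gcongr with j
      rw [le_sub_iff_add_le]
      exact_mod_cast card_missingColourBlocks_add_binom_le ha hb hab j
    _ = _ := by rw [sum_const, card_univ, ZMod.card, nsmul_eq_mul]

end ColourBlocks

section Residues

variable {n l : ℕ} [NeZero l]

lemma card_colourClass_natCast (j : ZMod l) :
    #(colourClass (fun x : Fin n => ((x : ℕ) : ZMod l)) j) =
      n / l + if j.val < n % l then 1 else 0 := by
  have hclass : (colourClass (fun x : Fin n => ((x : ℕ) : ZMod l)) j).map Fin.valEmbedding =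
      {k ∈ range n | k ≡ j.val [MOD l]} := by
    rw [colourClass, ← Nat.Iio_eq_range, ← Fin.map_valEmbedding_univ, filter_map]
    conv_lhs => rw [← ZMod.natCast_zmod_val j]
    simp only [Function.comp_def, Fin.valEmbedding_apply, ZMod.natCast_eq_natCast_iff]
  rw [← card_map, hclass, ← Nat.count_eq_card_filter_range, Nat.count_modEq_card _ (NeZero.pos l),
    Nat.mod_eq_of_lt j.val_lt]

lemma div_le_card_colourClass_natCast (j : ZMod l) :
    n / l ≤ #(colourClass (fun x : Fin n => ((x : ℕ) : ZMod l)) j) := by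
  rw [card_colourClass_natCast]
  exact Nat.le_add_right _ _

lemma card_colourClass_natCast_le (j : ZMod l) :
    #(colourClass (fun x : Fin n => ((x : ℕ) : ZMod l)) j) ≤ (n + l - 1) / l := by
  rw [card_colourClass_natCast, Nat.le_div_iff_mul_le (NeZero.pos l)]
  have hn := Nat.div_add_mod' n l
  refine Nat.le_sub_one_of_lt ?_
  split_ifs with h
  · linarith
  · rw [add_zero]
    linarith [NeZero.pos l, Nat.zero_le (n % l)]

lemma surjective_natCast_comp_val (h : l ≤ n) :
    Function.Surjective (fun x : Fin n => ((x : ℕ) : ZMod l)) :=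
  fun j => ⟨⟨j.val, j.val_lt.trans_le h⟩, ZMod.natCast_zmod_val j⟩

end Residues

lemma isSESystem_colourBlockSystem {n l t : ℕ} [NeZero l] {col : Fin n → ZMod l}
    (hcol : Function.Surjective col) (hclass : ∀ j, #(colourClass col j) + t + 2 ≤ n)
    (c : ZMod l) : IsSESystem n t (colourBlockSystem col t c) :=
  ⟨fun _ hB => card_of_mem_colourBlockSystem hB, fun _ hX hXt =>
    exists_mem_colourBlockSystem_card_sdiff_eq_one hcol (by simpa using hclass) c hX hXt⟩

theorem stmt3_general (n t l : ℕ) (htn : t + 2 < n)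
    (hl1 : (n : ℝ) / ((n : ℝ) - (t : ℝ) - 2) ≤ (l : ℝ)) (hl2 : l ≤ n) :
    (SENumber n t : ℝ) ≤ (1 / (l : ℝ)) * (n.choose t : ℝ) +
      (l : ℝ) * ((binom ((n : ℤ) - (n / l : ℕ)) (t : ℤ) : ℝ) -
        (binom ((n : ℤ) - (n / l : ℕ) - ((n + l - 1) / l : ℕ))
          ((t : ℤ) - ((n + l - 1) / l : ℕ)) : ℝ)) := by
  have hroom : n ≤ l * (n - (t + 2)) :=
    le_mul_sub_of_div_le htn (by rwa [Nat.cast_add, Nat.cast_two, ← sub_sub])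
  have hl : 2 ≤ l := by
    by_contra! h
    interval_cases l <;> omega
  have : NeZero l := ⟨by omega⟩
  have hceil : (n + l - 1) / l ≤ n - (t + 2) :=
    (Nat.div_le_iff_le_mul_add_pred (by omega)).mpr (by omega)
  set col := fun x : Fin n => ((x : ℕ) : ZMod l)
  obtain ⟨c, hc⟩ := exists_card_colourSumBlocks_le col t
  have hSE := isSESystem_colourBlockSystem (t := t) (surjective_natCast_comp_val hl2)
    (fun j => by have := card_colourClass_natCast_le (n := n) (l := l) j; omega) c
  have : Nontrivial (ZMod l) := ZMod.nontrivial_iff.mpr (by omega)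
  have hcard := card_colourBlockSystem_le (t := t) div_le_card_colourClass_natCast
    card_colourClass_natCast_le (by simpa using Nat.div_add_add_sub_one_div_le (n := n) hl) c
  rw [Fintype.card_fin] at hc hcard
  rw [binom_natCast_sub (Nat.div_le_self n l), one_div_mul_eq_div]
  calc (SENumber n t : ℝ) ≤ #(colourBlockSystem col t c) := mod_cast SENumber_le_card hSE
    _ ≤ _ := by linarith

theorem stmt3 (n t l : ℕ) (ht : 0 < t) (htn : t + 2 < n)
    (hl1 : (n : ℝ) / ((n : ℝ) - (t : ℝ) - 2) ≤ (l : ℝ)) (hl2 : l ≤ n) :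
    (SENumber n t : ℝ) ≤ (1 / (l : ℝ)) * (n.choose t : ℝ) +
      (l : ℝ) * ((binom ((n : ℤ) - (n / l : ℕ)) (t : ℤ) : ℝ) -
        (binom ((n : ℤ) - (n / l : ℕ) - ((n + l - 1) / l : ℕ))
          ((t : ℤ) - ((n + l - 1) / l : ℕ)) : ℝ)) :=
  stmt3_general n t l htn hl1 hl2
end

section
/- For all integers n and t with 0 < t < n − 1, the single-exclusion number satisfies S(n,t) ≤ Σ_{i=0}^{t} T(n−t+i−1, i+1, i). -/
/-- An `(n,s,t)`-Turán system: a collection of `t`-subsets (blocks) of an `n`-set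
such that every `s`-subset contains at least one block. -/
def IsTuranSystem (n s t : ℕ) (T : Finset (Finset (Fin n))) : Prop :=
  (∀ B ∈ T, B.card = t) ∧
  ∀ X : Finset (Fin n), X.card = s → ∃ B ∈ T, B ⊆ X

/-- The `(n,s,t)`-Turán number `T(n,s,t)`: the least number of blocks in an
`(n,s,t)`-Turán system. -/
noncomputable def turanNumber (n s t : ℕ) : ℕ :=
  sInf {m : ℕ | ∃ T : Finset (Finset (Fin n)), IsTuranSystem n s t T ∧ T.card = m}

/-!
Remove the last point. If `T` is an `(n-1, t+2, t+1)`-Turán system and `S` an `(n-1, t)`-SE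
system on the first `n-1` points, then the blocks of `T` together with the sets `B ∪ {last}`,
`B ∈ S`, form an `(n, t+1)`-SE system: a set `X` avoiding the last point is served by `T` when
`|X| = t+2` and by `S` otherwise, while a set containing it is served by `S` applied to the rest
of `X`, or by any Turán block when `X` is the last point alone. Hence
`S(n, t+1) ≤ T(n-1, t+2, t+1) + S(n-1, t)`, and unrolling down to `S(m, 0) = 1 ≤ T(m-1, 1, 0)`
gives the sum.
-/

open Finset

section Turan

variable {m s t : ℕ}

lemma IsTuranSystem.nonempty {T : Finset (Finset (Fin m))} (hT : IsTuranSystem m s t T)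
    (hs : s ≤ m) : T.Nonempty := by
  obtain ⟨X, -, hX⟩ := exists_subset_card_eq (s := (univ : Finset (Fin m))) (by simpa using hs)
  obtain ⟨B, hB, -⟩ := hT.2 X hX
  exact ⟨B, hB⟩

lemma exists_isTuranSystem_card_eq_turanNumber (hts : t ≤ s) :
    ∃ T, IsTuranSystem m s t T ∧ T.card = turanNumber m s t := by
  have hall : IsTuranSystem m s t (powersetCard t univ) := by
    refine ⟨fun B hB => mem_powersetCard_univ.1 hB, fun X hX => ?_⟩
    obtain ⟨B, hBX, hB⟩ := exists_subset_card_eq (hts.trans hX.ge)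
    exact ⟨B, mem_powersetCard_univ.2 hB, hBX⟩
  exact Nat.sInf_mem (s := {n | ∃ T, IsTuranSystem m s t T ∧ T.card = n}) ⟨_, _, hall, rfl⟩

lemma turanNumber_pos (hts : t ≤ s) (hs : s ≤ m) : 0 < turanNumber m s t := by
  obtain ⟨T, hT, hcard⟩ := exists_isTuranSystem_card_eq_turanNumber (m := m) hts
  exact hcard ▸ (hT.nonempty hs).card_pos

end Turan

lemma isSESystem_singleton_empty (n : ℕ) : IsSESystem n 0 {∅} := by
  refine ⟨fun B hB => by simp [mem_singleton.1 hB], fun X h₁ h₀ => ?_⟩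
  exact ⟨∅, mem_singleton_self _, by simp only [sdiff_empty]; omega⟩

namespace Fin

lemma last_notMem_map_castSuccEmb {k : ℕ} (B : Finset (Fin k)) :
    last k ∉ B.map castSuccEmb := by
  simp [castSucc_ne_last]

lemma exists_finset_eq_map_castSuccEmb_or_insert_last {k : ℕ} (X : Finset (Fin (k + 1))) :
    ∃ X' : Finset (Fin k),
      X = X'.map castSuccEmb ∨ X = insert (last k) (X'.map castSuccEmb) := by
  refine ⟨univ.filter (fun y => castSucc y ∈ X), ?_⟩
  have herase : (univ.filter (fun y => castSucc y ∈ X)).map castSuccEmb = X.erase (last k) := by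
    ext x
    induction x using lastCases <;> simp [castSucc_ne_last]
  rw [herase]
  by_cases h : last k ∈ X
  · exact Or.inr (insert_erase h).symm
  · exact Or.inl (erase_eq_of_notMem h).symm

end Fin

def seExtension {k : ℕ} (T S : Finset (Finset (Fin k))) : Finset (Finset (Fin (k + 1))) :=
  T.image (·.map Fin.castSuccEmb) ∪ S.image (fun B => insert (Fin.last k) (B.map Fin.castSuccEmb))

lemma card_seExtension_le {k : ℕ} (T S : Finset (Finset (Fin k))) :
    (seExtension T S).card ≤ T.card + S.card :=
  (card_union_le _ _).trans (add_le_add card_image_le card_image_le)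

section Extension

variable {k t : ℕ} {T S : Finset (Finset (Fin k))}

open Fin in
lemma isSESystem_seExtension (hT : IsTuranSystem k (t + 1 + 1) (t + 1) T) (hS : IsSESystem k t S)
    (hk : t + 2 ≤ k) : IsSESystem (k + 1) (t + 1) (seExtension T S) := by
  have turan_mem : ∀ B ∈ T, B.map castSuccEmb ∈ seExtension T S := fun B hB =>
    mem_union_left _ (mem_image_of_mem _ hB)
  have se_mem : ∀ B ∈ S, insert (last k) (B.map castSuccEmb) ∈ seExtension T S := fun B hB =>
    mem_union_right _ (mem_image_of_mem (fun B => insert (last k) (B.map castSuccEmb)) hB)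
  refine ⟨fun B hB => ?_, fun X h₁ h₂ => ?_⟩
  · simp only [seExtension, mem_union, mem_image] at hB
    rcases hB with ⟨B, hB, rfl⟩ | ⟨B, hB, rfl⟩
    · rw [card_map, hT.1 B hB]
    · rw [card_insert_of_notMem (last_notMem_map_castSuccEmb B), card_map, hS.1 B hB]
  obtain ⟨X, rfl | rfl⟩ := exists_finset_eq_map_castSuccEmb_or_insert_last X
  · rw [card_map] at h₁ h₂
    rcases h₂.lt_or_eq with hlt | heq
    · obtain ⟨B, hB, hXB⟩ := hS.2 X h₁ (by omega)
      refine ⟨_, se_mem B hB, ?_⟩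
      rwa [sdiff_insert_of_notMem (last_notMem_map_castSuccEmb X), ← Finset.map_sdiff, card_map]
    · obtain ⟨B, hB, hBX⟩ := hT.2 X heq
      refine ⟨_, turan_mem B hB, ?_⟩
      rw [← Finset.map_sdiff, card_map, card_sdiff_of_subset hBX, hT.1 B hB, heq,
        Nat.add_sub_cancel_left]
  · rw [card_insert_of_notMem (last_notMem_map_castSuccEmb X), card_map] at h₂
    rcases X.eq_empty_or_nonempty with rfl | hX
    · obtain ⟨B, hB⟩ := hT.nonempty hk
      refine ⟨_, turan_mem B hB, ?_⟩
      rw [map_empty, insert_empty, sdiff_eq_self_of_disjoint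
        (disjoint_singleton_left.2 (last_notMem_map_castSuccEmb B)), card_singleton]
    · obtain ⟨B, hB, hXB⟩ := hS.2 X hX.card_pos (by omega)
      refine ⟨_, se_mem B hB, ?_⟩
      rwa [insert_sdiff_insert, sdiff_insert_of_notMem (last_notMem_map_castSuccEmb X),
        ← Finset.map_sdiff, card_map]

end Extension

lemma exists_isSESystem_card_le_sum_turanNumber (n t : ℕ) (hn : t + 1 < n) :
    ∃ S, IsSESystem n t S ∧
      S.card ≤ ∑ i ∈ range (t + 1), turanNumber (n - t + i - 1) (i + 1) i := by
  induction t generalizing n with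
  | zero =>
    refine ⟨{∅}, isSESystem_singleton_empty n, ?_⟩
    rw [sum_range_one, card_singleton]
    exact turanNumber_pos (Nat.zero_le _) (by omega)
  | succ t ih =>
    obtain ⟨k, rfl⟩ : ∃ k, n = k + 1 := ⟨n - 1, by omega⟩
    obtain ⟨S, hS, hScard⟩ := ih k (by omega)
    obtain ⟨T, hT, hTcard⟩ :=
      exists_isTuranSystem_card_eq_turanNumber (m := k) (s := t + 1 + 1) (t := t + 1) (by omega)
    refine ⟨seExtension T S, isSESystem_seExtension hT hS (by omega), ?_⟩
    have hlast : k - t + (t + 1) - 1 = k := by omega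
    rw [sum_range_succ, Nat.add_sub_add_right, hlast]
    calc (seExtension T S).card ≤ T.card + S.card := card_seExtension_le T S
      _ ≤ _ := by omega

theorem stmt8_general (n t : ℕ) (htn : t + 1 < n) :
    SENumber n t ≤ ∑ i ∈ Finset.range (t + 1), turanNumber (n - t + i - 1) (i + 1) i := by
  obtain ⟨S, hS, hcard⟩ := exists_isSESystem_card_le_sum_turanNumber n t htn
  exact (Nat.sInf_le (s := {m | ∃ S, IsSESystem n t S ∧ S.card = m}) ⟨S, hS, rfl⟩).trans hcard

theorem stmt8 (n t : ℕ) (ht : 0 < t) (htn : t + 1 < n) :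
    SENumber n t ≤ ∑ i ∈ Finset.range (t + 1), turanNumber (n - t + i - 1) (i + 1) i :=
  stmt8_general n t htn
end

section
/- For every integer n ≥ 4, the single-exclusion number satisfies S(n, n−3) ≤ ⌈n/2⌉·⌊n/2⌋ − 1. -/
namespace SE9

def el (n : ℕ) (h : 0 < n) (i : ℕ) : Fin n := ⟨i % n, Nat.mod_lt _ h⟩

def tri (n : ℕ) (h : 0 < n) (i j k : ℕ) : Finset (Fin n) := {el n h i, el n h j, el n h k}

def pairs (k : ℕ) : Finset ((_ : ℕ) × ℕ) := (Finset.range k).sigma fun j => Finset.range j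

/-- The family of 3-subsets (complements of blocks). `a` = ⌈n/2⌉, `m` = ⌊n/2⌋. -/
def fam (n : ℕ) (h : 0 < n) (a m : ℕ) : Finset (Finset (Fin n)) :=
  (pairs a).image (fun p => tri n h p.2 p.1 (a + p.1 % m)) ∪
  (pairs m).image (fun p => tri n h (a + p.2) (a + p.1) p.1) ∪
  (if a = m then
      insert (tri n h 0 1 a) ((Finset.range (m-2)).image fun y => tri n h a (a+y+1) (y+2))
    else (Finset.range (m-1)).image fun y => tri n h 0 m (a+y+1))

section Basic

variable {n : ℕ} (h : 0 < n) {a m : ℕ}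

lemma el_val {i : ℕ} (hi : i < n) : (el n h i).val = i := Nat.mod_eq_of_lt hi

lemma el_ne {i j : ℕ} (hi : i < n) (hj : j < n) (hij : i ≠ j) :
    el n h i ≠ el n h j := by
  intro he
  apply hij
  have := congrArg Fin.val he
  rwa [el_val h hi, el_val h hj] at this

lemma mem_tri₁ {i j k : ℕ} : el n h i ∈ tri n h i j k := by simp [tri]
lemma mem_tri₂ {i j k : ℕ} : el n h j ∈ tri n h i j k := by simp [tri]
lemma mem_tri₃ {i j k : ℕ} : el n h k ∈ tri n h i j k := by simp [tri]

lemma tri_card {i j k : ℕ} (hi : i < n) (hj : j < n) (hk : k < n)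
    (hij : i ≠ j) (hik : i ≠ k) (hjk : j ≠ k) : (tri n h i j k).card = 3 := by
  rw [tri, Finset.card_insert_of_notMem, Finset.card_insert_of_notMem, Finset.card_singleton]
  · simp [el_ne h hj hk hjk]
  · simp [el_ne h hi hj hij, el_ne h hi hk hik]

lemma mem_fam_T1 {i j : ℕ} (hij : i < j) (hj : j < a) :
    tri n h i j (a + j % m) ∈ fam n h a m := by
  apply Finset.mem_union_left
  apply Finset.mem_union_left
  exact Finset.mem_image.2 ⟨⟨j, i⟩, by simp [pairs, Finset.mem_sigma, hij, hj], rfl⟩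

lemma mem_fam_T2 {i j : ℕ} (hij : i < j) (hj : j < m) :
    tri n h (a + i) (a + j) j ∈ fam n h a m := by
  apply Finset.mem_union_left
  apply Finset.mem_union_right
  exact Finset.mem_image.2 ⟨⟨j, i⟩, by simp [pairs, Finset.mem_sigma, hij, hj], rfl⟩

lemma mem_fam_X0 (ham : a = m) : tri n h 0 1 a ∈ fam n h a m := by
  apply Finset.mem_union_right
  rw [if_pos ham]
  exact Finset.mem_insert_self _ _

lemma mem_fam_XE (ham : a = m) {y : ℕ} (hy : 1 ≤ y) (hy2 : y ≤ m - 2) :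
    tri n h a (a + y) (y + 1) ∈ fam n h a m := by
  apply Finset.mem_union_right
  rw [if_pos ham]
  apply Finset.mem_insert_of_mem
  refine Finset.mem_image.2 ⟨y - 1, by simp [Finset.mem_range]; omega, ?_⟩
  have e1 : a + (y - 1) + 1 = a + y := by omega
  have e2 : y - 1 + 2 = y + 1 := by omega
  rw [e1, e2]

lemma mem_fam_XO (ham : a = m + 1) {y : ℕ} (hy : 1 ≤ y) (hy2 : y < m) :
    tri n h 0 m (a + y) ∈ fam n h a m := by
  apply Finset.mem_union_right
  rw [if_neg (by omega)]
  refine Finset.mem_image.2 ⟨y - 1, by simp [Finset.mem_range]; omega, ?_⟩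
  have e1 : a + (y - 1) + 1 = a + y := by omega
  rw [e1]

end Basic

end SE9

namespace SE9Main

open SE9

/-- `Y` is closed under the family: any triple with two elements in `Y` lies in `Y`. -/
def Closed (n : ℕ) (h : 0 < n) (a m : ℕ) (Y : Finset (Fin n)) : Prop :=
  ∀ C ∈ fam n h a m, ∀ x ∈ C, ∀ y ∈ C, x ≠ y → x ∈ Y → y ∈ Y → C ⊆ Y

variable {n : ℕ} (h : 0 < n) {a m : ℕ} {Y : Finset (Fin n)}

lemma tri_close (hY : Closed n h a m Y)
    {p q r : ℕ} (hC : tri n h p q r ∈ fam n h a m) (hp : p < n) (hq : q < n) (hr : r < n)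
    (hpq : p ≠ q) (hpr : p ≠ r) (hqr : q ≠ r) :
    (el n h p ∈ Y → el n h q ∈ Y → el n h r ∈ Y) ∧
    (el n h p ∈ Y → el n h r ∈ Y → el n h q ∈ Y) ∧
    (el n h q ∈ Y → el n h r ∈ Y → el n h p ∈ Y) := by
  refine ⟨fun h1 h2 => ?_, fun h1 h2 => ?_, fun h1 h2 => ?_⟩
  · exact hY _ hC _ (mem_tri₁ h) _ (mem_tri₂ h) (el_ne h hp hq hpq) h1 h2 (mem_tri₃ h)
  · exact hY _ hC _ (mem_tri₁ h) _ (mem_tri₃ h) (el_ne h hp hr hpr) h1 h2 (mem_tri₂ h)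
  · exact hY _ hC _ (mem_tri₂ h) _ (mem_tri₃ h) (el_ne h hq hr hqr) h1 h2 (mem_tri₁ h)

lemma RT1 (hnm : n = a + m) (hm : 2 ≤ m) (hY : Closed n h a m Y)
    {i j : ℕ} (hij : i < j) (hj : j < a) :
    (el n h i ∈ Y → el n h j ∈ Y → el n h (a + j % m) ∈ Y) ∧
    (el n h i ∈ Y → el n h (a + j % m) ∈ Y → el n h j ∈ Y) ∧
    (el n h j ∈ Y → el n h (a + j % m) ∈ Y → el n h i ∈ Y) :=
  tri_close h hY (mem_fam_T1 h hij hj)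
    (by omega) (by omega) (by have := Nat.mod_lt j (show 0 < m by omega); omega)
    (by omega) (by omega) (by omega)

lemma RT2 (hnm : n = a + m) (hm : 2 ≤ m) (hma : m ≤ a) (hY : Closed n h a m Y)
    {i j : ℕ} (hij : i < j) (hj : j < m) :
    (el n h (a + i) ∈ Y → el n h (a + j) ∈ Y → el n h j ∈ Y) ∧
    (el n h (a + i) ∈ Y → el n h j ∈ Y → el n h (a + j) ∈ Y) ∧
    (el n h (a + j) ∈ Y → el n h j ∈ Y → el n h (a + i) ∈ Y) :=
  tri_close h hY (mem_fam_T2 h hij hj)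
    (by omega) (by omega) (by omega) (by omega) (by omega) (by omega)

lemma RX0 (hnm : n = a + m) (hm : 2 ≤ m) (hY : Closed n h a m Y) (he : a = m) :
    (el n h 0 ∈ Y → el n h 1 ∈ Y → el n h a ∈ Y) ∧
    (el n h 0 ∈ Y → el n h a ∈ Y → el n h 1 ∈ Y) ∧
    (el n h 1 ∈ Y → el n h a ∈ Y → el n h 0 ∈ Y) :=
  tri_close h hY (mem_fam_X0 h he)
    (by omega) (by omega) (by omega) (by omega) (by omega) (by omega)

lemma RXE (hnm : n = a + m) (hm : 2 ≤ m) (hY : Closed n h a m Y) (he : a = m)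
    {y : ℕ} (hy : 1 ≤ y) (hy2 : y ≤ m - 2) :
    (el n h a ∈ Y → el n h (a + y) ∈ Y → el n h (y + 1) ∈ Y) ∧
    (el n h a ∈ Y → el n h (y + 1) ∈ Y → el n h (a + y) ∈ Y) ∧
    (el n h (a + y) ∈ Y → el n h (y + 1) ∈ Y → el n h a ∈ Y) :=
  tri_close h hY (mem_fam_XE h he hy hy2)
    (by omega) (by omega) (by omega) (by omega) (by omega) (by omega)

lemma RXO (hnm : n = a + m) (hm : 2 ≤ m) (hY : Closed n h a m Y) (ho : a = m + 1)
    {y : ℕ} (hy : 1 ≤ y) (hy2 : y < m) :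
    (el n h 0 ∈ Y → el n h m ∈ Y → el n h (a + y) ∈ Y) ∧
    (el n h 0 ∈ Y → el n h (a + y) ∈ Y → el n h m ∈ Y) ∧
    (el n h m ∈ Y → el n h (a + y) ∈ Y → el n h 0 ∈ Y) :=
  tri_close h hY (mem_fam_XO h ho hy hy2)
    (by omega) (by omega) (by omega) (by omega) (by omega) (by omega)

end SE9Main

namespace SE9Main

open SE9

variable {n : ℕ} (h : 0 < n) {a m : ℕ} {Y : Finset (Fin n)}

lemma allB (hnm : n = a + m) (ham : a = m ∨ a = m + 1) (hm : 2 ≤ m) (hY : Closed n h a m Y)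
    (hb : ∀ j < m, el n h (a + j) ∈ Y) : ∀ i < n, el n h i ∈ Y := by
  have hma : m ≤ a := by rcases ham with h' | h' <;> omega
  have ha1 : el n h 1 ∈ Y :=
    (RT2 h hnm hm hma hY (show 0 < 1 by omega) (by omega)).1 (hb 0 (by omega)) (hb 1 (by omega))
  have ha0 : el n h 0 ∈ Y := by
    have t := (RT1 h hnm hm hY (show 0 < 1 by omega) (show 1 < a by omega)).2.2
    have e : a + 1 % m = a + 1 := by rw [Nat.mod_eq_of_lt (by omega : 1 < m)]
    rw [e] at t
    exact t ha1 (hb 1 (by omega))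
  have haj : ∀ j, j < m → el n h j ∈ Y := by
    intro j hj
    rcases Nat.eq_zero_or_pos j with rfl | hj1
    · exact ha0
    · exact (RT2 h hnm hm hma hY hj1 hj).1 (hb 0 (by omega)) (hb j hj)
  have haa : ∀ i, i < a → el n h i ∈ Y := by
    intro i hi
    rcases lt_or_ge i m with him | him
    · exact haj i him
    · have hi' : i = m := by omega
      have hma' : m < a := by omega
      have t := (RT1 h hnm hm hY (show 0 < m by omega) hma').2.1
      have e : a + m % m = a + 0 := by
        have : m % m = 0 := Nat.mod_self m
        omega
      rw [e] at t
      rw [hi']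
      exact t ha0 (hb 0 (by omega))
  intro i hi
  rcases lt_or_ge i a with hia | hia
  · exact haa i hia
  · have e : a + (i - a) = i := by omega
    rw [← e]
    exact hb (i - a) (by omega)

lemma LD (hnm : n = a + m) (ham : a = m ∨ a = m + 1) (hm : 2 ≤ m) (hY : Closed n h a m Y)
    (ha0 : el n h 0 ∈ Y) (hb0 : el n h (a + 0) ∈ Y) (hb1 : el n h (a + 1) ∈ Y) :
    ∀ j < m, el n h (a + j) ∈ Y := by
  have hma : m ≤ a := by rcases ham with h' | h' <;> omega
  rcases ham with he | ho
  · intro j hj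
    induction j with
    | zero => exact hb0
    | succ k ih =>
      rcases Nat.eq_zero_or_pos k with rfl | hk
      · exact hb1
      · have hbk := ih (by omega)
        have hak1 : el n h (k + 1) ∈ Y :=
          (RXE h hnm hm hY he hk (by omega)).1 hb0 hbk
        exact (RT2 h hnm hm hma hY (show 0 < k + 1 by omega) hj).2.1 hb0 hak1
  · have hamY : el n h m ∈ Y := by
      have t := (RT1 h hnm hm hY (show 0 < m by omega) (show m < a by omega)).2.1
      have e : a + m % m = a + 0 := by have : m % m = 0 := Nat.mod_self m; omega
      rw [e] at t
      exact t ha0 hb0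
    intro j hj
    rcases Nat.eq_zero_or_pos j with rfl | hj1
    · exact hb0
    · exact (RXO h hnm hm hY ho hj1 hj).1 ha0 hamY

lemma Lbb (hnm : n = a + m) (ham : a = m ∨ a = m + 1) (hm : 2 ≤ m) (hY : Closed n h a m Y)
    {x y : ℕ} (hxy : x < y) (hy : y < m)
    (hbx : el n h (a + x) ∈ Y) (hby : el n h (a + y) ∈ Y) : ∀ i < n, el n h i ∈ Y := by
  have hma : m ≤ a := by rcases ham with h' | h' <;> omega
  have hay : el n h y ∈ Y := (RT2 h hnm hm hma hY hxy hy).1 hbx hby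
  have hbi : ∀ i, i < y → el n h (a + i) ∈ Y := fun i hi =>
    (RT2 h hnm hm hma hY hi hy).2.2 hby hay
  have hb0 : el n h (a + 0) ∈ Y := hbi 0 (by omega)
  have hb1 : el n h (a + 1) ∈ Y := by
    rcases Nat.lt_or_ge 1 y with h1 | h1
    · exact hbi 1 h1
    · have e : a + 1 = a + y := by omega
      rw [e]; exact hby
  have ha0 : el n h 0 ∈ Y := by
    have t := (RT1 h hnm hm hY (show 0 < y by omega) (show y < a by omega)).2.2
    have e : a + y % m = a + y := by rw [Nat.mod_eq_of_lt hy]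
    rw [e] at t
    exact t hay hby
  exact allB h hnm ham hm hY (LD h hnm ham hm hY ha0 hb0 hb1)

lemma Laa (hnm : n = a + m) (ham : a = m ∨ a = m + 1) (hm : 2 ≤ m) (hY : Closed n h a m Y)
    {x y : ℕ} (hxy : x < y) (hy : y < a)
    (hax : el n h x ∈ Y) (hay : el n h y ∈ Y) : ∀ i < n, el n h i ∈ Y := by
  have hma : m ≤ a := by rcases ham with h' | h' <;> omega
  rcases lt_or_ge y m with hym | hym
  · have hby : el n h (a + y) ∈ Y := by
      have t := (RT1 h hnm hm hY hxy hy).1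
      have e : a + y % m = a + y := by rw [Nat.mod_eq_of_lt hym]
      rw [e] at t
      exact t hax hay
    have ha0 : el n h 0 ∈ Y := by
      rcases Nat.eq_zero_or_pos x with rfl | hx1
      · exact hax
      · have t := (RT1 h hnm hm hY (show 0 < y by omega) hy).2.2
        have e : a + y % m = a + y := by rw [Nat.mod_eq_of_lt hym]
        rw [e] at t
        exact t hay hby
    have hbi : ∀ i, i < y → el n h (a + i) ∈ Y := fun i hi =>
      (RT2 h hnm hm hma hY hi hym).2.2 hby hay
    have hb0 : el n h (a + 0) ∈ Y := hbi 0 (by omega)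
    have hb1 : el n h (a + 1) ∈ Y := by
      rcases Nat.lt_or_ge 1 y with h1 | h1
      · exact hbi 1 h1
      · have e : a + 1 = a + y := by omega
        rw [e]; exact hby
    exact allB h hnm ham hm hY (LD h hnm ham hm hY ha0 hb0 hb1)
  · have hym' : y = m := by omega
    have ho : a = m + 1 := by omega
    rw [hym'] at hxy hy hay
    have hb0 : el n h (a + 0) ∈ Y := by
      have t := (RT1 h hnm hm hY hxy hy).1
      have e : a + m % m = a + 0 := by rw [Nat.mod_self]
      rw [e] at t
      exact t hax hay
    have ha0 : el n h 0 ∈ Y := by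
      rcases Nat.eq_zero_or_pos x with rfl | hx1
      · exact hax
      · have t := (RT1 h hnm hm hY (show 0 < m by omega) hy).2.2
        have e : a + m % m = a + 0 := by rw [Nat.mod_self]
        rw [e] at t
        exact t hay hb0
    have hbj : ∀ j, j < m → el n h (a + j) ∈ Y := by
      intro j hj
      rcases Nat.eq_zero_or_pos j with rfl | hj1
      · exact hb0
      · exact (RXO h hnm hm hY ho hj1 hj).1 ha0 hay
    exact allB h hnm ham hm hY hbj

lemma Lcross (hnm : n = a + m) (ham : a = m ∨ a = m + 1) (hm : 2 ≤ m) (hY : Closed n h a m Y)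
    {x y : ℕ} (hx : x < a) (hy : y < m)
    (hax : el n h x ∈ Y) (hby : el n h (a + y) ∈ Y) : ∀ i < n, el n h i ∈ Y := by
  have hma : m ≤ a := by rcases ham with h' | h' <;> omega
  rcases lt_trichotomy x y with hlt | rfl | hgt
  · have hay : el n h y ∈ Y := by
      have t := (RT1 h hnm hm hY hlt (show y < a by omega)).2.1
      have e : a + y % m = a + y := by rw [Nat.mod_eq_of_lt hy]
      rw [e] at t
      exact t hax hby
    exact Laa h hnm ham hm hY hlt (by omega) hax hay
  · rcases Nat.eq_zero_or_pos x with rfl | hx1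
    · rcases ham with he | ho
      · have ha1 : el n h 1 ∈ Y := (RX0 h hnm hm hY he).2.1 hax hby
        exact Laa h hnm (Or.inl he) hm hY (show (0:ℕ) < 1 by omega) (by omega) hax ha1
      · have hamY : el n h m ∈ Y := by
          have t := (RT1 h hnm hm hY (show 0 < m by omega) (show m < a by omega)).2.1
          have e : a + m % m = a + 0 := by rw [Nat.mod_self]
          rw [e] at t
          exact t hax hby
        exact Laa h hnm (Or.inr ho) hm hY (show 0 < m by omega) (by omega) hax hamY
    · have hb0 : el n h (a + 0) ∈ Y := (RT2 h hnm hm hma hY hx1 hy).2.2 hby hax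
      exact Lbb h hnm ham hm hY hx1 hy hb0 hby
  · rcases lt_or_ge x m with hxm | hxm
    · have hbx : el n h (a + x) ∈ Y := (RT2 h hnm hm hma hY hgt hxm).2.1 hby hax
      exact Lbb h hnm ham hm hY hgt hxm hby hbx
    · have hxm' : x = m := by omega
      have ho : a = m + 1 := by omega
      rw [hxm'] at hgt hx hax
      rcases Nat.eq_zero_or_pos y with rfl | hy1
      · have ha0 : el n h 0 ∈ Y := by
          have t := (RT1 h hnm hm hY (show 0 < m by omega) hx).2.2
          have e : a + m % m = a + 0 := by rw [Nat.mod_self]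
          rw [e] at t
          exact t hax hby
        exact Laa h hnm ham hm hY (show 0 < m by omega) hx ha0 hax
      · have ha0 : el n h 0 ∈ Y := (RXO h hnm hm hY ho hy1 hy).2.2 hax hby
        exact Laa h hnm ham hm hY (show 0 < m by omega) hx ha0 hax

lemma Lmain (hnm : n = a + m) (ham : a = m ∨ a = m + 1) (hm : 2 ≤ m) (hY : Closed n h a m Y)
    {u v : Fin n} (hu : u ∈ Y) (hv : v ∈ Y) (huv : u ≠ v) : ∀ i < n, el n h i ∈ Y := by
  have key : ∀ p q : ℕ, p < q → q < n → el n h p ∈ Y → el n h q ∈ Y → ∀ i < n, el n h i ∈ Y := by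
    intro p q hpq hq hp' hq'
    rcases lt_or_ge q a with hqa | hqa
    · exact Laa h hnm ham hm hY hpq hqa hp' hq'
    · rcases lt_or_ge p a with hpa | hpa
      · have e : a + (q - a) = q := by omega
        rw [← e] at hq'
        exact Lcross h hnm ham hm hY hpa (by omega) hp' hq'
      · have e1 : a + (p - a) = p := by omega
        have e2 : a + (q - a) = q := by omega
        rw [← e1] at hp'; rw [← e2] at hq'
        exact Lbb h hnm ham hm hY (by omega) (by omega) hp' hq'
  have hu' : el n h u.val ∈ Y := by
    have e : el n h u.val = u := Fin.ext (el_val h u.isLt)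
    rwa [e]
  have hv' : el n h v.val ∈ Y := by
    have e : el n h v.val = v := Fin.ext (el_val h v.isLt)
    rwa [e]
  have hne : u.val ≠ v.val := fun e => huv (Fin.ext e)
  rcases lt_or_gt_of_ne hne with h1 | h1
  · exact key u.val v.val h1 v.isLt hu' hv'
  · exact key v.val u.val h1 u.isLt hv' hu'

end SE9Main

namespace SE9Main

open SE9

variable {n : ℕ} (h : 0 < n) {a m : ℕ}

lemma pairs_card_mul (k : ℕ) : (pairs k).card * 2 = k * (k - 1) := by
  rw [pairs, Finset.card_sigma]
  simp only [Finset.card_range]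
  exact Finset.sum_range_id_mul_two k

lemma fam_card3 (hnm : n = a + m) (ham : a = m ∨ a = m + 1) (hm : 2 ≤ m) :
    ∀ C ∈ fam n h a m, C.card = 3 := by
  have hma : m ≤ a := by rcases ham with h' | h' <;> omega
  intro C hC
  rw [fam] at hC
  rcases Finset.mem_union.1 hC with hC | hC
  · rcases Finset.mem_union.1 hC with hC | hC
    · obtain ⟨p, hp, rfl⟩ := Finset.mem_image.1 hC
      simp only [pairs, Finset.mem_sigma, Finset.mem_range] at hp
      obtain ⟨hp1, hp2⟩ := hp
      have hmod := Nat.mod_lt p.1 (show 0 < m by omega)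
      exact tri_card h (by omega) (by omega) (by omega) (by omega) (by omega) (by omega)
    · obtain ⟨p, hp, rfl⟩ := Finset.mem_image.1 hC
      simp only [pairs, Finset.mem_sigma, Finset.mem_range] at hp
      obtain ⟨hp1, hp2⟩ := hp
      exact tri_card h (by omega) (by omega) (by omega) (by omega) (by omega) (by omega)
  · rcases ham with he | ho
    · rw [if_pos he] at hC
      rcases Finset.mem_insert.1 hC with rfl | hC
      · exact tri_card h (by omega) (by omega) (by omega) (by omega) (by omega) (by omega)
      · obtain ⟨y, hy, rfl⟩ := Finset.mem_image.1 hC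
        rw [Finset.mem_range] at hy
        exact tri_card h (by omega) (by omega) (by omega) (by omega) (by omega) (by omega)
    · rw [if_neg (by omega)] at hC
      obtain ⟨y, hy, rfl⟩ := Finset.mem_image.1 hC
      rw [Finset.mem_range] at hy
      exact tri_card h (by omega) (by omega) (by omega) (by omega) (by omega) (by omega)

lemma arith (a m S1 S2 E : ℕ) (h1 : S1 * 2 = a * (a - 1)) (h2 : S2 * 2 = m * (m - 1))
    (ham : a = m ∨ a = m + 1) (hm : 2 ≤ m) (hE : E ≤ m - 1) : S1 + S2 + E ≤ a * m - 1 := by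
  obtain ⟨k, rfl⟩ : ∃ k, m = k + 1 := ⟨m - 1, by omega⟩
  have hE' : E ≤ k := by omega
  apply Nat.le_sub_of_add_le
  rcases ham with rfl | rfl
  · have e1 : k + 1 - 1 = k := rfl
    rw [e1] at h1 h2
    nlinarith
  · have e1 : k + 1 + 1 - 1 = k + 1 := rfl
    have e2 : k + 1 - 1 = k := rfl
    rw [e1] at h1
    rw [e2] at h2
    nlinarith

lemma fam_card_le (hnm : n = a + m) (ham : a = m ∨ a = m + 1) (hm : 2 ≤ m) :
    (fam n h a m).card ≤ a * m - 1 := by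
  have h1 := pairs_card_mul a
  have h2 := pairs_card_mul m
  rw [fam]
  refine le_trans (Finset.card_union_le _ _) ?_
  have hx : (if a = m then
      insert (tri n h 0 1 a) ((Finset.range (m-2)).image fun y => tri n h a (a+y+1) (y+2))
    else (Finset.range (m-1)).image fun y => tri n h 0 m (a+y+1)).card ≤ m - 1 := by
    rcases ham with he | ho
    · rw [if_pos he]
      refine le_trans (Finset.card_insert_le _ _) ?_
      have := Finset.card_image_le (s := Finset.range (m-2))
        (f := fun y => tri n h a (a+y+1) (y+2))
      rw [Finset.card_range] at this
      omega
    · rw [if_neg (by omega)]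
      refine le_trans Finset.card_image_le ?_
      rw [Finset.card_range]
  refine le_trans (Nat.add_le_add (Finset.card_union_le _ _) hx) ?_
  have c1 : ((pairs a).image fun p => tri n h p.2 p.1 (a + p.1 % m)).card ≤ (pairs a).card :=
    Finset.card_image_le
  have c2 : ((pairs m).image fun p => tri n h (a + p.2) (a + p.1) p.1).card ≤ (pairs m).card :=
    Finset.card_image_le
  refine le_trans (Nat.add_le_add (Nat.add_le_add c1 c2) le_rfl) ?_
  exact arith a m _ _ _ h1 h2 ham hm le_rfl

end SE9Main

open SE9 SE9Main in
theorem stmt9 (n : ℕ) (hn : 4 ≤ n) :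
    SENumber n (n - 3) ≤ ((n + 1) / 2) * (n / 2) - 1 := by
  have h : 0 < n := by omega
  set m := n / 2 with hmdef
  set a := n - n / 2 with hadef
  have hnm : n = a + m := by omega
  have ham : a = m ∨ a = m + 1 := by omega
  have hm : 2 ≤ m := by omega
  set F := fam n h a m with hF
  set S : Finset (Finset (Fin n)) := F.image (fun C => Cᶜ) with hS
  have hcard3 := fam_card3 h hnm ham hm
  have hSE : IsSESystem n (n - 3) S := by
    constructor
    · intro B hB
      obtain ⟨C, hC, rfl⟩ := Finset.mem_image.1 hB
      rw [Finset.card_compl, hcard3 C hC, Fintype.card_fin]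
    · intro X hX1 hX2
      by_contra hcon
      push_neg at hcon
      have hYcl : Closed n h a m Xᶜ := by
        intro C hC x hx yy hy hxy hxX hyX
        have hne : (X \ Cᶜ).card ≠ 1 := hcon Cᶜ (Finset.mem_image_of_mem _ hC)
        have hXC : X \ Cᶜ = X ∩ C := by simp [Finset.sdiff_eq_inter_compl]
        rw [hXC] at hne
        have hne' : (C ∩ X).card ≠ 1 := by rwa [Finset.inter_comm] at hne
        have hint : ({x, yy} : Finset (Fin n)) ⊆ C ∩ Xᶜ := by
          intro z hz
          rcases Finset.mem_insert.1 hz with rfl | hz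
          · exact Finset.mem_inter.2 ⟨hx, hxX⟩
          · rw [Finset.mem_singleton.1 hz]
            exact Finset.mem_inter.2 ⟨hy, hyX⟩
        have h2le : 2 ≤ (C ∩ Xᶜ).card := by
          have hcc := Finset.card_le_card hint
          rwa [Finset.card_insert_of_notMem (by simp [hxy]), Finset.card_singleton] at hcc
        have hCX : C ∩ Xᶜ = C \ X := by simp [Finset.sdiff_eq_inter_compl]
        rw [hCX] at h2le
        have hsum : (C \ X).card + (C ∩ X).card = C.card := Finset.card_sdiff_add_card_inter C X
        have hc3 : C.card = 3 := hcard3 C hC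
        have hEq : C \ X = C :=
          Finset.eq_of_subset_of_card_le Finset.sdiff_subset (by omega)
        intro z hz
        rw [Finset.mem_compl]
        have hz' : z ∈ C \ X := by rw [hEq]; exact hz
        exact (Finset.mem_sdiff.1 hz').2
      have hXcard : X.card ≤ n - 2 := by omega
      have hYcard : 1 < Xᶜ.card := by
        rw [Finset.card_compl, Fintype.card_fin]; omega
      obtain ⟨u, hu, v, hv, huv⟩ := Finset.one_lt_card.1 hYcard
      have hall := Lmain h hnm ham hm hYcl hu hv huv
      have huniv : Xᶜ = Finset.univ := by
        apply Finset.eq_univ_of_forall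
        intro w
        have e : el n h w.val = w := Fin.ext (el_val h w.isLt)
        rw [← e]
        exact hall w.val w.isLt
      have hcardn : Xᶜ.card = n := by rw [huniv, Finset.card_univ, Fintype.card_fin]
      rw [Finset.card_compl, Fintype.card_fin] at hcardn
      omega
  have hmem : S.card ∈ {k : ℕ | ∃ S' : Finset (Finset (Fin n)), IsSESystem n (n - 3) S' ∧ S'.card = k} :=
    ⟨S, hSE, rfl⟩
  refine le_trans (Nat.sInf_le hmem) ?_
  have hSc : S.card ≤ a * m - 1 := le_trans Finset.card_image_le (fam_card_le h hnm ham hm)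
  have heq : (n + 1) / 2 * (n / 2) = a * m := by
    have e : (n + 1) / 2 = a := by omega
    rw [e]
  rw [heq]
  exact hSc
end

section
/- For all positive integers n and k with n ≥ k, the covering number satisfies C(n, k, k−1) ≤ (1/k)·binom(n, k−1) + ((k−1)/k)·binom(n−1, k−2), where binom(a,b) denotes the binomial coefficient (equal to 0 when b < 0 or b > a). -/
/-- An `(n,s,t)`-covering design: a collection of `s`-subsets (blocks) of an `n`-set
such that every `t`-subset is contained in at least one block. -/
def IsCoveringDesign (n s t : ℕ) (D : Finset (Finset (Fin n))) : Prop :=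
  (∀ B ∈ D, B.card = s) ∧
  ∀ X : Finset (Fin n), X.card = t → ∃ B ∈ D, X ⊆ B

/-- The `(n,s,t)`-covering number `C(n,s,t)`: the least number of blocks in an
`(n,s,t)`-covering design. -/
noncomputable def coveringNumber (n s t : ℕ) : ℕ :=
  sInf {m : ℕ | ∃ D : Finset (Finset (Fin n)), IsCoveringDesign n s t D ∧ D.card = m}
/-!
Label the ground set by `Fin n`, i.e. by `ℤ/n`. For a residue `i`, the `k`-sets whose elements
sum to `i` cover a `(k-1)`-set `X` unless no `y ∉ X` satisfies `∑ X + y = i`. As `y ↦ ∑ X + y`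
is a bijection, this happens for at most `|X| = k - 1` residues `i`. Completing the family with
one block for each such `X` and averaging over the `n` residues gives
`n · C(n,k,k-1) ≤ C(n,k) + (k-1) C(n,k-1)`, which a binomial identity turns into the bound.
-/

open Finset

theorem coveringNumber_le_card {n s t : ℕ} {D : Finset (Finset (Fin n))}
    (hD : IsCoveringDesign n s t D) : coveringNumber n s t ≤ #D :=
  Nat.sInf_le ⟨D, hD, rfl⟩

theorem coveringNumber_le_card_add_card_uncovered {n s t : ℕ} (hts : t ≤ s) (hsn : s ≤ n)
    {D : Finset (Finset (Fin n))} (hD : ∀ B ∈ D, #B = s) :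
    coveringNumber n s t ≤ #D + #{X ∈ powersetCard t univ | ∀ B ∈ D, ¬X ⊆ B} := by
  set U : Finset (Finset (Fin n)) := {X ∈ powersetCard t univ | ∀ B ∈ D, ¬X ⊆ B}
  have hext (X : Finset (Fin n)) : ∃ Y, (#X ≤ s → X ⊆ Y) ∧ #Y = s := by
    by_cases hX : #X ≤ s
    · obtain ⟨Y, hXY, -, hY⟩ := exists_subsuperset_card_eq (subset_univ X) hX (by simpa using hsn)
      exact ⟨Y, fun _ ↦ hXY, hY⟩
    · obtain ⟨Y, -, hY⟩ := exists_subset_card_eq (s := (univ : Finset (Fin n))) (by simpa using hsn)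
      exact ⟨Y, fun h ↦ absurd h hX, hY⟩
  choose E hXE hE using hext
  have hcover : IsCoveringDesign n s t (D ∪ U.image E) := by
    refine ⟨fun B hB ↦ ?_, fun X hX ↦ ?_⟩
    · rcases mem_union.mp hB with hB | hB
      · exact hD B hB
      · obtain ⟨X, -, rfl⟩ := mem_image.mp hB
        exact hE X
    · by_cases hXU : X ∈ U
      · exact ⟨E X, mem_union_right _ (mem_image_of_mem E hXU), hXE X (hX ▸ hts)⟩
      · obtain ⟨B, hB, hXB⟩ : ∃ B ∈ D, X ⊆ B := by simpa [U, hX] using hXU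
        exact ⟨B, mem_union_left _ hB, hXB⟩
  calc coveringNumber n s t ≤ #(D ∪ U.image E) := coveringNumber_le_card hcover
    _ ≤ #D + #(U.image E) := card_union_le _ _
    _ ≤ #D + #U := Nat.add_le_add_left card_image_le _

theorem Function.Surjective.card_compl_image_compl_le {α β : Type*} [Fintype α] [Fintype β]
    [DecidableEq α] [DecidableEq β] {f : α → β} (hf : f.Surjective) (X : Finset α) :
    #(Xᶜ.image f)ᶜ ≤ #X := by
  refine (card_le_card (t := X.image f) fun b hb ↦ ?_).trans card_image_le
  obtain ⟨a, rfl⟩ := hf b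
  have ha : a ∈ X := by
    by_contra ha
    exact mem_compl.mp hb (mem_image_of_mem f (mem_compl.mpr ha))
  exact mem_image_of_mem f ha

section SumClasses

variable {n : ℕ} [NeZero n]

def blocksWithSum (k : ℕ) (i : Fin n) : Finset (Finset (Fin n)) :=
  {B ∈ powersetCard k univ | ∑ x ∈ B, x = i}

def nonExtendable (t : ℕ) (i : Fin n) : Finset (Finset (Fin n)) :=
  {X ∈ powersetCard t univ | i ∉ Xᶜ.image ((∑ x ∈ X, x) + ·)}

theorem sum_card_blocksWithSum (k : ℕ) : ∑ i : Fin n, #(blocksWithSum k i) = n.choose k := by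
  simp only [blocksWithSum]
  rw [← card_eq_sum_card_fiberwise fun B _ ↦ mem_univ (∑ x ∈ B, x), card_powersetCard,
    card_univ, Fintype.card_fin]

theorem coveringNumber_le_card_blocksWithSum_add {k : ℕ} (hk : 0 < k) (hkn : k ≤ n)
    (i : Fin n) :
    coveringNumber n k (k - 1) ≤ #(blocksWithSum k i) + #(nonExtendable (k - 1) i) := by
  refine (coveringNumber_le_card_add_card_uncovered (Nat.sub_le k 1) hkn
    fun B hB ↦ (mem_powersetCard.mp (mem_filter.mp hB).1).2).trans
    (Nat.add_le_add_left (card_le_card fun X hX ↦ ?_) _)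
  obtain ⟨hXS, hunc⟩ := mem_filter.mp hX
  refine mem_filter.mpr ⟨hXS, fun hi ↦ ?_⟩
  obtain ⟨y, hy, rfl⟩ := mem_image.mp hi
  have hyX : y ∉ X := mem_compl.mp hy
  refine hunc (insert y X) (mem_filter.mpr ⟨mem_powersetCard.mpr ⟨subset_univ _, ?_⟩, ?_⟩)
    (subset_insert y X)
  · rw [card_insert_of_notMem hyX, (mem_powersetCard.mp hXS).2]
    omega
  · rw [sum_insert hyX, add_comm]

theorem sum_card_nonExtendable_le (t : ℕ) :
    ∑ i : Fin n, #(nonExtendable t i) ≤ t * n.choose t := by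
  have h := sum_card_bipartiteAbove_eq_sum_card_bipartiteBelow (s := powersetCard t univ)
    (t := (univ : Finset (Fin n))) fun X i ↦ i ∉ Xᶜ.image ((∑ x ∈ X, x) + ·)
  simp only [bipartiteAbove, bipartiteBelow] at h
  simp only [nonExtendable]
  rw [← h]
  calc _ ≤ ∑ X ∈ powersetCard t (univ : Finset (Fin n)), t := by
        refine sum_le_sum fun X hX ↦ ?_
        rw [filter_notMem_eq_sdiff, ← compl_eq_univ_sdiff, ← (mem_powersetCard.mp hX).2]
        exact (add_left_surjective _).card_compl_image_compl_le X
    _ = t * n.choose t := by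
        rw [sum_const, card_powersetCard, card_univ, Fintype.card_fin, smul_eq_mul, mul_comm]

end SumClasses

theorem mul_coveringNumber_le_choose_add {n k : ℕ} (hk : 0 < k) (hkn : k ≤ n) :
    n * coveringNumber n k (k - 1) ≤ n.choose k + (k - 1) * n.choose (k - 1) := by
  have : NeZero n := ⟨by omega⟩
  calc n * coveringNumber n k (k - 1) = ∑ _i : Fin n, coveringNumber n k (k - 1) := by
        rw [sum_const, card_univ, Fintype.card_fin, smul_eq_mul]
    _ ≤ ∑ i : Fin n, (#(blocksWithSum k i) + #(nonExtendable (k - 1) i)) :=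
        sum_le_sum fun i _ ↦ coveringNumber_le_card_blocksWithSum_add hk hkn i
    _ ≤ n.choose k + (k - 1) * n.choose (k - 1) := by
        rw [sum_add_distrib, sum_card_blocksWithSum]
        exact Nat.add_le_add_left (sum_card_nonExtendable_le (k - 1)) _

theorem Nat.mul_choose_add_pred_mul_choose {n k : ℕ} (hk : 0 < k) :
    k * (n.choose k + (k - 1) * n.choose (k - 1)) =
      n * (n.choose (k - 1) + (k - 1) * (n - 1).choose (k - 2)) := by
  obtain ⟨j, rfl⟩ : ∃ j, k = j + 1 := ⟨k - 1, by omega⟩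
  rcases j with _ | i
  · simp
  rcases n with _ | m
  · simp
  simp only [Nat.add_sub_cancel, show i + 1 + 1 - 2 = i by omega]
  have h₁ := Nat.add_one_mul_choose_eq m (i + 1)
  have h₂ := Nat.add_one_mul_choose_eq m i
  have h₃ := Nat.choose_succ_succ' m i
  zify at h₁ h₂ h₃ ⊢
  linear_combination -h₁ - ((i : ℤ) + 2) * h₂ - ((m : ℤ) + 1) * h₃

theorem mul_coveringNumber_le_choose_pred_add {n k : ℕ} (hk : 0 < k) (hkn : k ≤ n) :
    k * coveringNumber n k (k - 1) ≤ n.choose (k - 1) + (k - 1) * (n - 1).choose (k - 2) := by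
  refine Nat.le_of_mul_le_mul_left ?_ (show 0 < n by omega)
  calc n * (k * coveringNumber n k (k - 1)) = k * (n * coveringNumber n k (k - 1)) := by ring
    _ ≤ k * (n.choose k + (k - 1) * n.choose (k - 1)) :=
        Nat.mul_le_mul_left k (mul_coveringNumber_le_choose_add hk hkn)
    _ = _ := Nat.mul_choose_add_pred_mul_choose hk

theorem binom_natCast (a b : ℕ) : binom a b = a.choose b := by
  simp [binom]

theorem stmt12 (n k : ℕ) (hk : 0 < k) (hkn : k ≤ n) :
    (coveringNumber n k (k - 1) : ℝ) ≤
      (1 / (k : ℝ)) * (n.choose (k - 1) : ℝ) +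
      (((k : ℝ) - 1) / (k : ℝ)) * (binom ((n : ℤ) - 1) ((k : ℤ) - 2) : ℝ) := by
  have hbinom : ((k : ℝ) - 1) * (binom ((n : ℤ) - 1) ((k : ℤ) - 2) : ℝ) =
      ((k - 1 : ℕ) : ℝ) * ((n - 1).choose (k - 2) : ℝ) := by
    rcases Nat.lt_or_ge k 2 with hk2 | hk2
    · obtain rfl : k = 1 := by omega
      simp
    · rw [show (n : ℤ) - 1 = ((n - 1 : ℕ) : ℤ) by omega,
        show (k : ℤ) - 2 = ((k - 2 : ℕ) : ℤ) by omega, binom_natCast, Nat.cast_sub hk,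
        Nat.cast_one]
  have hbound : (k * coveringNumber n k (k - 1) : ℝ) ≤
      n.choose (k - 1) + ((k - 1 : ℕ) : ℝ) * (n - 1).choose (k - 2) := by
    exact_mod_cast mul_coveringNumber_le_choose_pred_add hk hkn
  calc (coveringNumber n k (k - 1) : ℝ)
      ≤ ((n.choose (k - 1) : ℝ) + ((k : ℝ) - 1) * binom ((n : ℤ) - 1) ((k : ℤ) - 2)) / k := by
        rw [le_div_iff₀ (by exact_mod_cast hk), hbinom, mul_comm]
        exact hbound
    _ = _ := by ring
end

section
/- For all integers n and k with 0 < k < n − 1, the single-exclusion number satisfies S(n, n−k−1) ≤ (1/k)·binom(n,k) + ((k−1)/k)·binom(n−1, k−1) − 1, where binom(a,b) denotes the binomial coefficient. -/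
open Finset

lemma card_filter_val_lt (n m : ℕ) (h : m ≤ n) :
    (univ.filter (fun x : Fin n => x.val < m)).card = m := by
  have hlt : ∀ i ∈ Finset.range m, i < n := fun i hi => lt_of_lt_of_le (mem_range.mp hi) h
  have heq : univ.filter (fun x : Fin n => x.val < m) = (Finset.range m).attachFin hlt := by
    ext x
    simp [Finset.mem_attachFin]
  rw [heq, Finset.card_attachFin, Finset.card_range]

lemma pascal' (m k : ℕ) (hm : 0 < m) (hk : 0 < k) :
    m.choose k = (m-1).choose (k-1) + (m-1).choose k := by
  obtain ⟨m', rfl⟩ : ∃ m', m = m' + 1 := ⟨m - 1, by omega⟩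
  obtain ⟨k', rfl⟩ : ∃ k', k = k' + 1 := ⟨k - 1, by omega⟩
  simp [Nat.choose_succ_succ']

lemma id_one (m k : ℕ) (hm : 0 < m) (hk : 0 < k) :
    k * m.choose k = m * (m-1).choose (k-1) := by
  obtain ⟨m', rfl⟩ : ∃ m', m = m' + 1 := ⟨m - 1, by omega⟩
  obtain ⟨k', rfl⟩ : ∃ k', k = k' + 1 := ⟨k - 1, by omega⟩
  simpa [mul_comm] using (Nat.add_one_mul_choose_eq m' k').symm

lemma id_two (m k : ℕ) (hm : 0 < m) (hk : 0 < k) :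
    (k-1) * m.choose (k-1) + m * (m-1).choose (k-1) = m * m.choose (k-1) := by
  obtain ⟨k', rfl⟩ : ∃ k', k = k' + 1 := ⟨k - 1, by omega⟩
  simp only [Nat.add_sub_cancel]
  rcases Nat.eq_zero_or_pos k' with rfl | hk'
  · simp
  · obtain ⟨k'', rfl⟩ : ∃ k'', k' = k'' + 1 := ⟨k' - 1, by omega⟩
    have hp : m.choose (k''+1) = (m-1).choose k'' + (m-1).choose (k''+1) :=
      pascal' m (k''+1) hm (by omega)
    have h1 : (k''+1) * m.choose (k''+1) = m * (m-1).choose k'' :=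
      id_one m (k''+1) hm (by omega)
    rw [h1, ← Nat.mul_add, ← hp]

lemma step_arith (m k d : ℕ) (hk : 0 < k) (hkm : k + 1 ≤ m)
    (hd : m * d ≤ m.choose k + (k-1) * m.choose (k-1)) :
    k * d + k * ((m-1).choose (k-1)) ≤ (m-1).choose (k-1) + k * (m.choose (k-1)) := by
  have hm0 : 0 < m := by omega
  have id1 := id_one m k hm0 hk
  have id2 := id_two m k hm0 hk
  apply Nat.le_of_mul_le_mul_left _ hm0
  calc m * (k * d + k * ((m-1).choose (k-1)))
      = k * (m * d) + m * (k * ((m-1).choose (k-1))) := by ring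
    _ ≤ k * (m.choose k + (k-1) * m.choose (k-1)) + m * (k * ((m-1).choose (k-1))) := by
        exact Nat.add_le_add_right (Nat.mul_le_mul_left k hd) _
    _ = m * ((m-1).choose (k-1)) + k * ((k-1) * m.choose (k-1) + m * ((m-1).choose (k-1))) := by
        rw [Nat.mul_add, id1]; ring
    _ = m * ((m-1).choose (k-1)) + k * (m * m.choose (k-1)) := by rw [id2]
    _ = m * ((m-1).choose (k-1) + k * (m.choose (k-1))) := by ring

lemma step_cover (n m k : ℕ) (hk : 0 < k) (hkm : k + 1 ≤ m) (hmn : m < n) :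
    ∃ D : Finset (Finset (Fin n)),
      (∀ A ∈ D, A.card = k ∧ ∀ x ∈ A, x.val < m) ∧
      (∀ E : Finset (Fin n), E.card = k - 1 → (∀ x ∈ E, x.val < m) →
        ∃ A ∈ D, E ⊆ A) ∧
      m * D.card ≤ m.choose k + (k - 1) * m.choose (k - 1) := by
  classical
  have hm0 : 0 < m := by omega
  set G : Finset (Fin n) := univ.filter (fun x => x.val < m) with hGdef
  have hGcard : G.card = m := card_filter_val_lt n m (le_of_lt hmn)
  have hmemG : ∀ x : Fin n, x ∈ G ↔ x.val < m := by
    intro x; simp [hGdef]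
  have hσlt : ∀ A : Finset (Fin n), (∑ x ∈ A, x.val) % m < m := fun A => Nat.mod_lt _ hm0
  let xe : ℕ → Finset (Fin n) → Fin n :=
    fun c E => ⟨(c + (m - (∑ x ∈ E, x.val) % m)) % m, lt_trans (Nat.mod_lt _ hm0) hmn⟩
  let K : ℕ → Finset (Finset (Fin n)) :=
    fun c => (G.powersetCard k).filter (fun A => (∑ x ∈ A, x.val) % m = c)
  let Df : ℕ → Finset (Finset (Fin n)) :=
    fun c => (G.powersetCard (k-1)).filter (fun E => xe c E ∈ E)
  have hKsum : ∑ c ∈ Finset.range m, (K c).card = m.choose k := by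
    have h := Finset.card_eq_sum_card_fiberwise
      (f := fun A : Finset (Fin n) => (∑ x ∈ A, x.val) % m) (s := G.powersetCard k)
      (t := Finset.range m) (fun A _ => Finset.mem_range.mpr (hσlt A))
    rw [Finset.card_powersetCard, hGcard] at h
    exact h.symm
  have hDfsum : ∑ c ∈ Finset.range m, (Df c).card ≤ (k - 1) * m.choose (k - 1) := by
    have h1 : ∀ c, (Df c).card =
        ∑ E ∈ G.powersetCard (k-1), if xe c E ∈ E then 1 else 0 := by
      intro c; rw [Finset.card_filter]
    calc ∑ c ∈ Finset.range m, (Df c).card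
        = ∑ c ∈ Finset.range m, ∑ E ∈ G.powersetCard (k-1),
            (if xe c E ∈ E then 1 else 0) := by simp_rw [h1]
      _ = ∑ E ∈ G.powersetCard (k-1), ∑ c ∈ Finset.range m,
            (if xe c E ∈ E then 1 else 0) := Finset.sum_comm
      _ ≤ ∑ _E ∈ G.powersetCard (k-1), (k-1) := by
          apply Finset.sum_le_sum
          intro E hE
          have hEcard : E.card = k - 1 := (Finset.mem_powersetCard.mp hE).2
          rw [← Finset.card_filter]
          calc ((Finset.range m).filter (fun c => xe c E ∈ E)).card ≤ E.card := by
                apply Finset.card_le_card_of_injOn (fun c => xe c E)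
                · intro c hc; exact (Finset.mem_filter.mp hc).2
                · intro c hc c' hc' hcc
                  have hc1 : c < m := Finset.mem_range.mp (Finset.mem_filter.mp hc).1
                  have hc2 : c' < m := Finset.mem_range.mp (Finset.mem_filter.mp hc').1
                  have hval := congrArg Fin.val hcc
                  simp only [xe] at hval
                  have h2 : c ≡ c' [MOD m] := Nat.ModEq.add_right_cancel' _ hval
                  unfold Nat.ModEq at h2
                  rwa [Nat.mod_eq_of_lt hc1, Nat.mod_eq_of_lt hc2] at h2
            _ = k - 1 := hEcard
      _ = (k-1) * m.choose (k-1) := by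
          rw [Finset.sum_const, Finset.card_powersetCard, hGcard, smul_eq_mul, mul_comm]
  obtain ⟨c, hcm, hc⟩ : ∃ c ∈ Finset.range m,
      m * ((K c).card + (Df c).card) ≤ m.choose k + (k-1) * m.choose (k-1) := by
    by_contra hcon
    push_neg at hcon
    set T := m.choose k + (k-1) * m.choose (k-1) with hT
    have h2 : ∑ c ∈ Finset.range m, (T + 1) ≤
        ∑ c ∈ Finset.range m, m * ((K c).card + (Df c).card) :=
      Finset.sum_le_sum (fun c hc => hcon c hc)
    rw [Finset.sum_const, Finset.card_range, ← Finset.mul_sum, smul_eq_mul] at h2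
    have h3 : ∑ c ∈ Finset.range m, ((K c).card + (Df c).card) ≤ T := by
      rw [Finset.sum_add_distrib, hKsum]
      exact Nat.add_le_add_left hDfsum _
    have h4 := Nat.mul_le_mul_left m h3
    have h5 := le_trans h2 h4
    rw [Nat.mul_add, Nat.mul_one] at h5
    omega
  -- fix the defects
  have hne : ∀ E ∈ Df c, (G \ E).Nonempty := by
    intro E hE
    have hE' := Finset.mem_powersetCard.mp (Finset.mem_filter.mp hE).1
    have hcard : (G \ E).card = m - (k-1) := by
      rw [Finset.card_sdiff_of_subset hE'.1, hGcard, hE'.2]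
    rw [← Finset.card_pos, hcard]
    omega
  set fixSet : Finset (Finset (Fin n)) :=
    (Df c).attach.image (fun E => insert (hne E.1 E.2).choose E.1) with hfixdef
  have hfixmem : ∀ A ∈ fixSet, ∃ E ∈ Df c, ∃ z ∈ G \ E, A = insert z E := by
    intro A hA
    rw [hfixdef] at hA
    obtain ⟨E, _, rfl⟩ := Finset.mem_image.mp hA
    exact ⟨E.1, E.2, (hne E.1 E.2).choose, (hne E.1 E.2).choose_spec, rfl⟩
  have hDfprop : ∀ E ∈ Df c, E ⊆ G ∧ E.card = k - 1 := by
    intro E hE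
    exact Finset.mem_powersetCard.mp (Finset.mem_filter.mp hE).1
  refine ⟨K c ∪ fixSet, ?_, ?_, ?_⟩
  · intro A hA
    rcases Finset.mem_union.mp hA with hA | hA
    · have h := Finset.mem_powersetCard.mp (Finset.mem_filter.mp hA).1
      exact ⟨h.2, fun x hx => (hmemG x).mp (h.1 hx)⟩
    · obtain ⟨E, hE, z, hz, rfl⟩ := hfixmem A hA
      obtain ⟨hEG, hEcard⟩ := hDfprop E hE
      obtain ⟨hzG, hzE⟩ := Finset.mem_sdiff.mp hz
      constructor
      · rw [Finset.card_insert_of_notMem hzE, hEcard]; omega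
      · intro x hx
        rcases Finset.mem_insert.mp hx with rfl | hx
        · exact (hmemG x).mp hzG
        · exact (hmemG x).mp (hEG hx)
  · intro E hEcard hEval
    have hEG : E ⊆ G := fun x hx => (hmemG x).mpr (hEval x hx)
    by_cases hx : xe c E ∈ E
    · have hE : E ∈ Df c :=
        Finset.mem_filter.mpr ⟨Finset.mem_powersetCard.mpr ⟨hEG, hEcard⟩, hx⟩
      refine ⟨insert (hne E hE).choose E, ?_, Finset.subset_insert _ _⟩
      apply Finset.mem_union_right
      rw [hfixdef]
      exact Finset.mem_image.mpr ⟨⟨E, hE⟩, Finset.mem_attach _ _, rfl⟩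
    · refine ⟨insert (xe c E) E, ?_, Finset.subset_insert _ _⟩
      apply Finset.mem_union_left
      have hxG : xe c E ∈ G := (hmemG _).mpr (Nat.mod_lt _ hm0)
      have hcard : (insert (xe c E) E).card = k := by
        rw [Finset.card_insert_of_notMem hx, hEcard]; omega
      refine Finset.mem_filter.mpr ⟨Finset.mem_powersetCard.mpr
        ⟨Finset.insert_subset hxG hEG, hcard⟩, ?_⟩
      rw [Finset.sum_insert hx]
      have hs : (∑ x ∈ E, x.val) % m < m := hσlt E
      have hcm' : c < m := Finset.mem_range.mp hcm
      show ((xe c E).val + ∑ x ∈ E, x.val) % m = c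
      calc ((xe c E).val + ∑ x ∈ E, x.val) % m
          = ((xe c E).val % m + (∑ x ∈ E, x.val) % m) % m := by rw [Nat.add_mod]
        _ = ((c + (m - (∑ x ∈ E, x.val) % m)) % m + (∑ x ∈ E, x.val) % m) % m := by
            simp only [xe]
            rw [Nat.mod_mod_of_dvd _ dvd_rfl]
        _ = ((c + (m - (∑ x ∈ E, x.val) % m)) + (∑ x ∈ E, x.val) % m) % m := by
            rw [Nat.mod_add_mod]
        _ = (c + m) % m := by
            congr 1
            omega
        _ = c := by rw [Nat.add_mod_right, Nat.mod_eq_of_lt hcm']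
  · calc m * (K c ∪ fixSet).card ≤ m * ((K c).card + fixSet.card) :=
        Nat.mul_le_mul_left m (Finset.card_union_le _ _)
    _ ≤ m * ((K c).card + (Df c).card) := by
        apply Nat.mul_le_mul_left
        apply Nat.add_le_add_left
        calc fixSet.card ≤ (Df c).attach.card := Finset.card_image_le
          _ = (Df c).card := Finset.card_attach
    _ ≤ m.choose k + (k-1) * m.choose (k-1) := hc

lemma main_cover (n k : ℕ) (hk : 0 < k) :
    ∀ m, k + 1 ≤ m → m ≤ n →
    ∃ C : Finset (Finset (Fin n)),
      (∀ B ∈ C, B.card = k + 1 ∧ ∀ x ∈ B, x.val < m) ∧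
      (∀ W : Finset (Fin n), (∀ x ∈ W, x.val < m) → k ≤ W.card → W.card ≤ m - 1 →
        ∃ B ∈ C, (B ∩ W).card = k) ∧
      k * C.card + k * k + 1 ≤ (m-1).choose k + k * ((m-1).choose (k-1)) + k := by
  intro m hm
  induction m, hm using Nat.le_induction with
  | base =>
    intro hn
    refine ⟨{univ.filter (fun x : Fin n => x.val < k + 1)}, ?_, ?_, ?_⟩
    · intro B hB
      rw [Finset.mem_singleton] at hB
      subst hB
      refine ⟨card_filter_val_lt n (k+1) hn, ?_⟩
      intro x hx
      exact (Finset.mem_filter.mp hx).2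
    · intro W hWval hWk hWk'
      have hWcard : W.card = k := by omega
      refine ⟨_, Finset.mem_singleton_self _, ?_⟩
      have hsub : W ⊆ univ.filter (fun x : Fin n => x.val < k + 1) := by
        intro x hx
        exact Finset.mem_filter.mpr ⟨Finset.mem_univ x, by simpa using hWval x hx⟩
      rw [Finset.inter_eq_right.mpr hsub, hWcard]
    · have h1 : (k+1-1).choose k = 1 := by simp
      have h2 : (k+1-1).choose (k-1) = k := by
        obtain ⟨k', rfl⟩ : ∃ k', k = k' + 1 := ⟨k - 1, by omega⟩
        simp [Nat.choose_succ_self_right]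
      rw [h1, h2, Finset.card_singleton]
      omega
  | succ m hm ih =>
    intro hn
    obtain ⟨C, hc1, hc2, hc3⟩ := ih (by omega)
    obtain ⟨D, hd1, hd2, hd3⟩ := step_cover n m k hk hm (by omega)
    have hmn : m < n := by omega
    set em : Fin n := ⟨m, hmn⟩ with hemdef
    refine ⟨C ∪ D.image (fun A => insert em A), ?_, ?_, ?_⟩
    · intro B hB
      rcases Finset.mem_union.mp hB with hB | hB
      · obtain ⟨h1, h2⟩ := hc1 B hB
        exact ⟨h1, fun x hx => lt_trans (h2 x hx) (Nat.lt_succ_self m)⟩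
      · obtain ⟨A, hA, rfl⟩ := Finset.mem_image.mp hB
        obtain ⟨h1, h2⟩ := hd1 A hA
        have hemA : em ∉ A := fun h => lt_irrefl m (h2 em h)
        constructor
        · rw [Finset.card_insert_of_notMem hemA, h1]
        · intro x hx
          rcases Finset.mem_insert.mp hx with rfl | hx
          · exact Nat.lt_succ_self m
          · exact lt_trans (h2 x hx) (Nat.lt_succ_self m)
    · intro W hWval hWk hWk'
      have hWm : W.card ≤ m := by omega
      by_cases hem : em ∈ W
      · by_cases hWbig : k + 1 ≤ W.card
        · -- use IH on W.erase em
          set W' := W.erase em with hW'def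
          have hW'val : ∀ x ∈ W', x.val < m := by
            intro x hx
            obtain ⟨hne, hxW⟩ := Finset.mem_erase.mp hx
            have := hWval x hxW
            have hxm : x.val ≠ m := fun h => hne (Fin.ext h)
            omega
          have hW'card : W'.card = W.card - 1 := Finset.card_erase_of_mem hem
          obtain ⟨B, hB, hBW'⟩ := hc2 W' hW'val (by omega) (by omega)
          refine ⟨B, Finset.mem_union_left _ hB, ?_⟩
          have hemB : em ∉ B := fun h => lt_irrefl m ((hc1 B hB).2 em h)
          have : B ∩ W = B ∩ W' := by
            ext x
            simp only [Finset.mem_inter, hW'def, Finset.mem_erase]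
            constructor
            · rintro ⟨hxB, hxW⟩
              exact ⟨hxB, fun h => hemB (h ▸ hxB), hxW⟩
            · rintro ⟨hxB, _, hxW⟩
              exact ⟨hxB, hxW⟩
          rw [this]
          exact hBW'
        · -- |W| = k, W contains em : use a D-block
          have hWcard : W.card = k := by omega
          set W' := W.erase em with hW'def
          have hW'val : ∀ x ∈ W', x.val < m := by
            intro x hx
            obtain ⟨hne, hxW⟩ := Finset.mem_erase.mp hx
            have := hWval x hxW
            have hxm : x.val ≠ m := fun h => hne (Fin.ext h)
            omega
          have hW'card : W'.card = k - 1 := by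
            rw [hW'def, Finset.card_erase_of_mem hem, hWcard]
          obtain ⟨A, hA, hW'A⟩ := hd2 W' hW'card hW'val
          refine ⟨insert em A, Finset.mem_union_right _
            (Finset.mem_image_of_mem _ hA), ?_⟩
          have hWsub : W ⊆ insert em A := by
            intro x hx
            by_cases hxe : x = em
            · exact hxe ▸ Finset.mem_insert_self _ _
            · exact Finset.mem_insert_of_mem
                (hW'A (Finset.mem_erase.mpr ⟨hxe, hx⟩))
          rw [Finset.inter_eq_right.mpr hWsub, hWcard]
      · -- em ∉ W
        have hWval' : ∀ x ∈ W, x.val < m := by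
          intro x hx
          have h1 := hWval x hx
          have hxm : x.val ≠ m := by
            intro h
            exact hem ((Fin.ext h : x = em) ▸ hx)
          omega
        by_cases hWsmall : W.card ≤ m - 1
        · obtain ⟨B, hB, hBW⟩ := hc2 W hWval' hWk hWsmall
          exact ⟨B, Finset.mem_union_left _ hB, hBW⟩
        · -- W is the full ground set of stage m
          have hWcard : W.card = m := by omega
          have hWG : W = univ.filter (fun x : Fin n => x.val < m) := by
            apply Finset.eq_of_subset_of_card_le
            · intro x hx
              exact Finset.mem_filter.mpr ⟨Finset.mem_univ x, hWval' x hx⟩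
            · rw [card_filter_val_lt n m (le_of_lt hmn), hWcard]
          obtain ⟨E₀, hE₀sub, hE₀card⟩ := Finset.exists_subset_card_eq (s := W) (n := k-1) (by omega)
          obtain ⟨A, hA, _⟩ := hd2 E₀ hE₀card (fun x hx => hWval' x (hE₀sub hx))
          refine ⟨insert em A, Finset.mem_union_right _
            (Finset.mem_image_of_mem _ hA), ?_⟩
          obtain ⟨hAcard, hAval⟩ := hd1 A hA
          have hAW : A ⊆ W := by
            intro x hx
            rw [hWG]
            exact Finset.mem_filter.mpr ⟨Finset.mem_univ x, hAval x hx⟩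
          have : insert em A ∩ W = A := by
            ext x
            simp only [Finset.mem_inter, Finset.mem_insert]
            constructor
            · rintro ⟨rfl | hxA, hxW⟩
              · exact absurd hxW hem
              · exact hxA
            · intro hxA
              exact ⟨Or.inr hxA, hAW hxA⟩
          rw [this, hAcard]
    · have hcard : (C ∪ D.image (fun A => insert em A)).card ≤ C.card + D.card := by
        calc (C ∪ D.image (fun A => insert em A)).card
            ≤ C.card + (D.image (fun A => insert em A)).card := Finset.card_union_le _ _
          _ ≤ C.card + D.card := Nat.add_le_add_left Finset.card_image_le _
      have hstep := step_arith m k D.card hk hm hd3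
      have hp : m.choose k = (m-1).choose (k-1) + (m-1).choose k :=
        pascal' m k (by omega) hk
      have hmul := Nat.mul_le_mul_left k hcard
      rw [Nat.mul_add] at hmul
      have hg : (m+1-1) = m := by omega
      rw [hg]
      linarith [hc3, hstep, hmul, hp]

theorem stmt13 (n k : ℕ) (hk : 0 < k) (hkn : k + 1 < n) :
    (SENumber n (n - k - 1) : ℝ) ≤
      (1 / (k : ℝ)) * (n.choose k : ℝ) +
      (((k : ℝ) - 1) / (k : ℝ)) * ((n - 1).choose (k - 1) : ℝ) - 1 := by
  classical
  obtain ⟨C, h1, h2, h3⟩ := main_cover n k hk n (by omega) le_rfl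
  set S : Finset (Finset (Fin n)) := C.image (fun B => Bᶜ) with hSdef
  have hSE : IsSESystem n (n - k - 1) S := by
    constructor
    · intro B hB
      obtain ⟨B', hB', rfl⟩ := Finset.mem_image.mp hB
      rw [Finset.card_compl, Fintype.card_fin, (h1 B' hB').1]
      omega
    · intro X hX1 hX2
      have ht : n - k - 1 + 1 = n - k := by omega
      rw [ht] at hX2
      have hXn : X.card ≤ n := Finset.card_le_card (Finset.subset_univ X) |>.trans_eq
        (by rw [Finset.card_univ, Fintype.card_fin])
      have hWcard : Xᶜ.card = n - X.card := by
        rw [Finset.card_compl, Fintype.card_fin]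
      obtain ⟨B, hB, hBW⟩ := h2 Xᶜ (fun x _ => x.isLt) (by omega) (by omega)
      refine ⟨Bᶜ, Finset.mem_image_of_mem _ hB, ?_⟩
      have hXC : X \ Bᶜ = B ∩ X := by
        ext x
        simp only [Finset.mem_sdiff, Finset.mem_compl, Finset.mem_inter, not_not]
        tauto
      rw [hXC]
      have hsplit := Finset.card_inter_add_card_sdiff B Xᶜ
      have hBX : B \ Xᶜ = B ∩ X := by
        ext x
        simp only [Finset.mem_sdiff, Finset.mem_compl, Finset.mem_inter, not_not]
      rw [hBX, hBW, (h1 B hB).1] at hsplit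
      omega
  have hle : SENumber n (n - k - 1) ≤ S.card := Nat.sInf_le ⟨S, hSE, rfl⟩
  have hle2 : S.card ≤ C.card := Finset.card_image_le
  have hkR : (0:ℝ) < k := by exact_mod_cast hk
  have hkR1 : (1:ℝ) ≤ k := by exact_mod_cast hk
  have hp : (n.choose k : ℝ) = ((n-1).choose k : ℝ) + ((n-1).choose (k-1) : ℝ) := by
    have := pascal' n k (by omega) hk
    push_cast [this]
    ring
  have h3R : (k:ℝ) * C.card + k*k + 1 ≤
      ((n-1).choose k : ℝ) + k * ((n-1).choose (k-1) : ℝ) + k := by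
    exact_mod_cast h3
  have hfin : (C.card : ℝ) ≤ 1 / (k:ℝ) * (n.choose k : ℝ) +
      (((k:ℝ) - 1) / k) * ((n-1).choose (k-1) : ℝ) - 1 := by
    rw [show (1/(k:ℝ)) * (n.choose k : ℝ) + (((k:ℝ)-1)/k) * ((n-1).choose (k-1) : ℝ) - 1
        = ((n.choose k : ℝ) + ((k:ℝ)-1) * ((n-1).choose (k-1) : ℝ) - k) / k by
      field_simp]
    rw [le_div_iff₀ hkR]
    rw [hp]
    nlinarith [sq_nonneg ((k:ℝ) - 1)]
  calc (SENumber n (n - k - 1) : ℝ) ≤ (C.card : ℝ) := by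
        exact_mod_cast le_trans hle hle2
    _ ≤ _ := hfin
end
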